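/- arXiv:2510.07906 — 10 statements merged into one kernel-verified Lean document; each statement's English description precedes it below -/
import Mathlib

section
/- Every perfect equilibrium of a finite normal-form game is a correlated perfect equilibrium (when viewed as the induced product distribution on strategy profiles). -/
open Finset Filter Topology

variable {ι : Type*} [Fintype ι] [DecidableEq ι]

def IsDist {S : ι → Type*} [∀ i, Fintype (S i)] (ρ : (∀ i, S i) → ℝ) : Prop :=
  (∀ s, 0 ≤ ρ s) ∧ ∑ s, ρ s = 1

def CompletelyMixed {S : ι → Type*} [∀ i, Fintype (S i)] (ρ : (∀ i, S i) → ℝ) : Prop :=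
  ∀ s, 0 < ρ s

def marg {S : ι → Type*} [∀ i, Fintype (S i)] [∀ i, DecidableEq (S i)]
    (ρ : (∀ i, S i) → ℝ) (i : ι) (si : S i) : ℝ :=
  ∑ s : ∀ j, S j, if s i = si then ρ s else 0

/-- The quantity `∑_{s_{-i}} ρ(s_i, s_{-i}) (u_i(s_i,s_{-i}) - u_i(s_i', s_{-i}))`. -/
def devGain {S : ι → Type*} [∀ i, Fintype (S i)] [∀ i, DecidableEq (S i)]
    (u : ∀ _ : ι, (∀ j, S j) → ℝ) (ρ : (∀ i, S i) → ℝ) (i : ι) (si si' : S i) : ℝ :=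
  ∑ s : ∀ j, S j, if s i = si then ρ s * (u i s - u i (Function.update s i si')) else 0

def IsCE {S : ι → Type*} [∀ i, Fintype (S i)] [∀ i, DecidableEq (S i)]
    (u : ∀ _ : ι, (∀ j, S j) → ℝ) (ρ : (∀ i, S i) → ℝ) : Prop :=
  IsDist ρ ∧ ∀ i (si si' : S i), 0 ≤ devGain u ρ i si si'

def IsCPE {S : ι → Type*} [∀ i, Fintype (S i)] [∀ i, DecidableEq (S i)]
    (u : ∀ _ : ι, (∀ j, S j) → ℝ) (ρ : (∀ i, S i) → ℝ) : Prop :=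
  IsDist ρ ∧ ∃ ρk : ℕ → (∀ i, S i) → ℝ,
    (∀ k, IsDist (ρk k) ∧ CompletelyMixed (ρk k)) ∧
    (∀ s, Tendsto (fun k => ρk k s) atTop (𝓝 (ρ s))) ∧
    ∀ k i si, 0 < marg ρ i si → ∀ si', 0 ≤ devGain u (ρk k) i si si'

def IsMixedProfile {S : ι → Type*} [∀ i, Fintype (S i)] [∀ i, DecidableEq (S i)] (σ : ∀ i, S i → ℝ) : Prop :=
  ∀ i, (∀ si, 0 ≤ σ i si) ∧ ∑ si, σ i si = 1

/-- The product distribution over profiles induced by a mixed strategy profile. -/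
def prodDist {S : ι → Type*} [∀ i, Fintype (S i)] [∀ i, DecidableEq (S i)] (σ : ∀ i, S i → ℝ) : (∀ i, S i) → ℝ :=
  fun s => ∏ i, σ i (s i)

/-- Selten perfect equilibrium: a sequence of completely mixed profiles converging to `σ`
such that every strategy in the support of `σ i` is a best response to `σ₋ᵢᵏ` for all `k`. -/
def IsPerfect {S : ι → Type*} [∀ i, Fintype (S i)] [∀ i, DecidableEq (S i)] (u : ∀ _ : ι, (∀ j, S j) → ℝ) (σ : ∀ i, S i → ℝ) : Prop :=
  IsMixedProfile σ ∧ ∃ σk : ℕ → ∀ i, S i → ℝ,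
    (∀ k, IsMixedProfile (σk k) ∧ ∀ i si, 0 < σk k i si) ∧
    (∀ i si, Tendsto (fun k => σk k i si) atTop (𝓝 (σ i si))) ∧
    ∀ k i (si : S i), 0 < σ i si → ∀ si',
      ∑ s : ∀ j, S j,
          (∏ j ∈ Finset.univ.erase i, σk k j (s j)) * u i (Function.update s i si') ≤
        ∑ s : ∀ j, S j,
          (∏ j ∈ Finset.univ.erase i, σk k j (s j)) * u i (Function.update s i si)


lemma sum_ite_fiber {S : ι → Type*} [∀ i, Fintype (S i)] [∀ i, DecidableEq (S i)]
    (i : ι) (si : S i) (f : (∀ j, S j) → ℝ)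
    (hf : ∀ s t, f (Function.update s i t) = f s) :
    (Fintype.card (S i) : ℝ) * (∑ s : ∀ j, S j, if s i = si then f s else 0)
      = ∑ s : ∀ j, S j, f s := by
  have key : ∀ ti : S i, (∑ s : ∀ j, S j, if s i = ti then f s else 0)
      = ∑ s : ∀ j, S j, if s i = si then f s else 0 := by
    intro ti
    have hT : Function.Involutive
        (fun s : ∀ j, S j => Function.update s i (Equiv.swap ti si (s i))) := by
      intro s
      funext j
      rcases eq_or_ne j i with rfl | hj
      · simp [Equiv.swap_apply_self]
      · simp [Function.update_of_ne hj]
    refine Fintype.sum_bijective _ hT.bijective _ _ ?_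
    intro s
    have h1 : f (Function.update s i (Equiv.swap ti si (s i))) = f s := hf s _
    have h2 : (Function.update s i (Equiv.swap ti si (s i))) i
        = Equiv.swap ti si (s i) := Function.update_self _ _ _
    by_cases h : s i = ti
    · have h3 : Equiv.swap ti si (s i) = si := by rw [h, Equiv.swap_apply_left]
      simp [h2, h3, h, hf s si]
    · have hne : Equiv.swap ti si (s i) ≠ si := by
        intro hc
        apply h
        have : Equiv.swap ti si (s i) = Equiv.swap ti si ti := by
          rw [hc, Equiv.swap_apply_left]
        exact (Equiv.swap ti si).injective this
      simp [h2, h1, h, hne]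
  calc (Fintype.card (S i) : ℝ) * (∑ s : ∀ j, S j, if s i = si then f s else 0)
      = ∑ _ti : S i, ∑ s : ∀ j, S j, if s i = si then f s else 0 := by
        rw [Finset.sum_const, nsmul_eq_mul, Finset.card_univ]
    _ = ∑ ti : S i, ∑ s : ∀ j, S j, if s i = ti then f s else 0 :=
        Finset.sum_congr rfl fun ti _ => (key ti).symm
    _ = ∑ s : ∀ j, S j, ∑ ti : S i, if s i = ti then f s else 0 := Finset.sum_comm
    _ = ∑ s : ∀ j, S j, f s := by
        refine Finset.sum_congr rfl fun s _ => ?_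
        simp

lemma prodDist_isDist {S : ι → Type*} [∀ i, Fintype (S i)] [∀ i, DecidableEq (S i)]
    (τ : ∀ i, S i → ℝ) (hτ : IsMixedProfile τ) : IsDist (prodDist τ) := by
  constructor
  · intro s
    exact Finset.prod_nonneg fun j _ => (hτ j).1 _
  · have h1 : ∏ i, ∑ si, τ i si = ∑ s : ∀ i, S i, prodDist τ s := by
      rw [Finset.prod_univ_sum (fun i => (Finset.univ : Finset (S i)))]
      simp [prodDist]
    rw [← h1]
    exact Finset.prod_eq_one fun i _ => (hτ i).2

/-- Every perfect equilibrium, viewed as the induced product distribution over strategy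
profiles, is a correlated perfect equilibrium. -/
theorem perfect_isCPE {S : ι → Type*} [∀ i, Fintype (S i)] [∀ i, DecidableEq (S i)] (u : ∀ _ : ι, (∀ j, S j) → ℝ) (σ : ∀ i, S i → ℝ)
    (h : IsPerfect u σ) : IsCPE u (prodDist σ) := by
  obtain ⟨hσ, σk, hσk, hconv, hbr⟩ := h
  refine ⟨prodDist_isDist σ hσ, fun k => prodDist (σk k), ?_, ?_, ?_⟩
  · intro k
    exact ⟨prodDist_isDist _ (hσk k).1, fun s => Finset.prod_pos fun j _ => (hσk k).2 j (s j)⟩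
  · intro s
    exact tendsto_finset_prod _ fun i _ => hconv i (s i)
  · intro k i si hm si'
    -- σ i si > 0
    have hσpos : 0 < σ i si := by
      by_contra hns
      have h0 : σ i si = 0 := le_antisymm (not_lt.mp hns) ((hσ i).1 si)
      have hz : marg (prodDist σ) i si = 0 := by
        refine Finset.sum_eq_zero fun s _ => ?_
        by_cases hs : s i = si
        · rw [if_pos hs, prodDist]
          apply Finset.prod_eq_zero (Finset.mem_univ i)
          rw [hs]; exact h0
        · simp [hs]
      rw [hz] at hm
      exact lt_irrefl 0 hm
    have H := hbr k i si hσpos si'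
    set P : (∀ j, S j) → ℝ := fun s => ∏ j ∈ Finset.univ.erase i, σk k j (s j) with hPdef
    set f : (∀ j, S j) → ℝ :=
      fun s => P s * (u i (Function.update s i si) - u i (Function.update s i si')) with hfdef
    have hf : ∀ s t, f (Function.update s i t) = f s := by
      intro s t
      have hPu : P (Function.update s i t) = P s := by
        refine Finset.prod_congr rfl fun j hj => ?_
        rw [Function.update_of_ne (Finset.ne_of_mem_erase hj)]
      simp only [hfdef, hPu, Function.update_idem]
    have hfull : 0 ≤ ∑ s : ∀ j, S j, f s := by
      have : ∑ s : ∀ j, S j, f s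
          = (∑ s : ∀ j, S j, P s * u i (Function.update s i si))
            - ∑ s : ∀ j, S j, P s * u i (Function.update s i si') := by
        rw [← Finset.sum_sub_distrib]
        exact Finset.sum_congr rfl fun s _ => by simp [hfdef]; ring
      rw [this]
      exact sub_nonneg.mpr H
    have hcard : 0 < (Fintype.card (S i) : ℝ) := by
      have hne : Nonempty (S i) := by
        by_contra hne
        have : IsEmpty (S i) := not_nonempty_iff.mp hne
        have h2 := (hσ i).2
        rw [Finset.univ_eq_empty, Finset.sum_empty] at h2
        exact one_ne_zero h2.symm
      exact_mod_cast Fintype.card_pos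
    have hres : 0 ≤ ∑ s : ∀ j, S j, if s i = si then f s else 0 := by
      have hkey := sum_ite_fiber i si f hf
      nlinarith [hfull, hcard, hkey]
    have hdg : devGain u (prodDist (σk k)) i si si'
        = σk k i si * ∑ s : ∀ j, S j, if s i = si then f s else 0 := by
      rw [devGain, Finset.mul_sum]
      refine Finset.sum_congr rfl fun s _ => ?_
      by_cases hs : s i = si
      · have h1 : prodDist (σk k) s = σk k i si * P s := by
          rw [prodDist, ← Finset.mul_prod_erase Finset.univ _ (Finset.mem_univ i), hs]
        have h2 : Function.update s i si = s := by
          rw [← hs]; exact Function.update_eq_self i s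
        simp only [hs, if_true, hfdef, h1, h2]
        ring
      · simp [hs]
    rw [hdg]
    exact mul_nonneg (le_of_lt ((hσk k).2 i si)) hres
end

section
/- Every correlated perfect equilibrium is a correlated equilibrium. -/
open Finset Filter Topology

variable {ι : Type*} [Fintype ι] [DecidableEq ι]

/-- Every correlated perfect equilibrium is a correlated equilibrium. -/
theorem isCPE_isCE {S : ι → Type*} [∀ i, Fintype (S i)] [∀ i, DecidableEq (S i)] (u : ∀ _ : ι, (∀ j, S j) → ℝ) (ρ : (∀ i, S i) → ℝ)
    (h : IsCPE u ρ) : IsCE u ρ := by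
  obtain ⟨hd, ρk, hk, hlim, hge⟩ := h
  refine ⟨hd, fun i si si' => ?_⟩
  rcases lt_or_ge 0 (marg ρ i si) with hm | hm
  · -- limit of nonneg sequence
    have hten : Tendsto (fun k => devGain u (ρk k) i si si') atTop
        (𝓝 (devGain u ρ i si si')) := by
      unfold devGain
      apply tendsto_finset_sum
      intro s _
      by_cases hs : s i = si
      · simp only [hs, if_true]
        exact ((hlim s).mul tendsto_const_nhds)
      · simp only [hs, if_false]
        exact tendsto_const_nhds
    exact le_of_tendsto_of_tendsto' tendsto_const_nhds hten
      (fun k => hge k i si hm si')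
  · -- marginal is zero: each ρ s with s i = si is zero
    have hzero : ∀ s : ∀ j, S j, s i = si → ρ s = 0 := by
      intro s hs
      by_contra hne
      have hpos : 0 < ρ s := lt_of_le_of_ne (hd.1 s) (Ne.symm hne)
      have : 0 < marg ρ i si := by
        unfold marg
        refine Finset.sum_pos' (fun t _ => ?_) ⟨s, Finset.mem_univ s, by simp [hs, hpos]⟩
        split <;> [exact (hd.1 t); exact le_refl 0]
      linarith
    unfold devGain
    rw [Finset.sum_eq_zero]
    intro s _
    by_cases hs : s i = si
    · simp [hs, hzero s hs]
    · simp [hs]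
end

section
/- In any correlated perfect equilibrium of a finite normal-form game, no weakly dominated pure strategy receives positive marginal probability. -/
open Finset Filter Topology

variable {ι : Type*} [Fintype ι] [DecidableEq ι]

/-- `s_i` is weakly dominated: some mixed strategy does at least as well against every
opposing profile and strictly better against some opposing profile. -/
def WeaklyDominated {S : ι → Type*} [∀ i, Fintype (S i)] [∀ i, DecidableEq (S i)] (u : ∀ _ : ι, (∀ j, S j) → ℝ) (i : ι) (si : S i) : Prop :=
  ∃ σi : S i → ℝ, (∀ ti, 0 ≤ σi ti) ∧ (∑ ti, σi ti = 1) ∧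
    (∀ s : ∀ j, S j,
      u i (Function.update s i si) ≤ ∑ ti, σi ti * u i (Function.update s i ti)) ∧
    (∃ s : ∀ j, S j,
      u i (Function.update s i si) < ∑ ti, σi ti * u i (Function.update s i ti))

/-- In a correlated perfect equilibrium, no weakly dominated pure strategy receives
positive marginal probability. -/
theorem cpe_no_weaklyDominated {S : ι → Type*} [∀ i, Fintype (S i)] [∀ i, DecidableEq (S i)] (u : ∀ _ : ι, (∀ j, S j) → ℝ)
    (ρ : (∀ i, S i) → ℝ) (h : IsCPE u ρ) (i : ι) (si : S i)
    (hdom : WeaklyDominated u i si) : marg ρ i si = 0 := by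
  by_contra h0
  obtain ⟨hdist, ρk, hk, htend, hBR⟩ := h
  have hmargnn : 0 ≤ marg ρ i si := by
    apply Finset.sum_nonneg
    intro s _
    split; exacts [hdist.1 s, le_rfl]
  have hmpos : 0 < marg ρ i si := lt_of_le_of_ne hmargnn (Ne.symm h0)
  obtain ⟨σ, hσnn, hσsum, hle, s0, hlt⟩ := hdom
  have hge := hBR 0 i si hmpos
  set ν := ρk 0 with hν
  have hνpos : ∀ s, 0 < ν s := (hk 0).2
  -- G = ∑ ti σ ti * devGain
  set G : ℝ := ∑ s : ∀ j, S j,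
      (if s i = si then ν s * (u i s - ∑ ti, σ ti * u i (Function.update s i ti)) else 0)
    with hG
  have hGeq : G = ∑ ti, σ ti * devGain u ν i si ti := by
    rw [hG]
    unfold devGain
    simp_rw [Finset.mul_sum]
    rw [Finset.sum_comm]
    apply Finset.sum_congr rfl
    intro s _
    by_cases hs : s i = si
    · simp only [hs, if_true]
      have hterm : ∀ ti, σ ti * (ν s * (u i s - u i (Function.update s i ti)))
          = u i s * ν s * σ ti - ν s * (σ ti * u i (Function.update s i ti)) :=
        fun ti => by ring
      simp_rw [hterm]
      rw [Finset.sum_sub_distrib, ← Finset.mul_sum, ← Finset.mul_sum, hσsum]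
      ring
    · simp [hs]
  have hGnn : 0 ≤ G := by
    rw [hGeq]
    exact Finset.sum_nonneg fun ti _ => mul_nonneg (hσnn ti) (hge ti)
  have hGneg : G < 0 := by
    rw [hG]
    have : (0:ℝ) = ∑ _s : ∀ j, S j, (0:ℝ) := by simp
    rw [this]
    apply Finset.sum_lt_sum
    · intro s _
      by_cases hs : s i = si
      · simp only [hs, if_true]
        have h1 := hle s
        rw [show Function.update s i si = s from by rw [← hs]; exact Function.update_eq_self i s] at h1
        exact mul_nonpos_of_nonneg_of_nonpos (le_of_lt (hνpos s)) (by linarith)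
      · simp [hs]
    · refine ⟨Function.update s0 i si, Finset.mem_univ _, ?_⟩
      simp only [Function.update_self, if_true]
      apply mul_neg_of_pos_of_neg (hνpos _)
      rw [sub_neg]
      calc u i (Function.update s0 i si) < ∑ ti, σ ti * u i (Function.update s0 i ti) := hlt
        _ = ∑ ti, σ ti * u i (Function.update (Function.update s0 i si) i ti) := by
            simp [Function.update_idem]
  linarith
end

section
/- If there exists an S^ρ-restricted dual vector α and a strategy profile s' at which the aggregate deviation gain ∑_{i∈N} D_i(s', α_i) is strictly positive, then the correlated equilibrium ρ is not correlated perfect. -/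
open Finset Filter Topology

variable {ι : Type*} [Fintype ι] [DecidableEq ι]

/-- Expected gain `D_i(s, α_i)` to player `i` from deviation plan `αi` at profile `s`. -/
def Dgain {S : ι → Type*} [∀ i, Fintype (S i)] [∀ i, DecidableEq (S i)]
    (u : ∀ _ : ι, (∀ j, S j) → ℝ) (i : ι) (s : ∀ j, S j) (αi : S i → S i → ℝ) : ℝ :=
  ∑ ti, αi (s i) ti * (u i (Function.update s i ti) - u i s)

/-- A dual vector: each `α i (s_i)` is a distribution over deviations, and the aggregate
expected gain is nonnegative at every profile. -/
def IsDualVector {S : ι → Type*} [∀ i, Fintype (S i)] [∀ i, DecidableEq (S i)]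
    (u : ∀ _ : ι, (∀ j, S j) → ℝ) (α : ∀ i, S i → S i → ℝ) : Prop :=
  (∀ i si, (∀ ti, 0 ≤ α i si ti) ∧ ∑ ti, α i si ti = 1) ∧
  ∀ s : ∀ j, S j, 0 ≤ ∑ i, Dgain u i s (α i)

/-- The dual vector is `S^ρ`-restricted: it prescribes obedience off the support of `ρ`. -/
def RestrictedTo {S : ι → Type*} [∀ i, Fintype (S i)] [∀ i, DecidableEq (S i)]
    (ρ : (∀ i, S i) → ℝ) (α : ∀ i, S i → S i → ℝ) : Prop :=
  ∀ i si, ¬ 0 < marg ρ i si → ∀ ti, α i si ti = if ti = si then 1 else 0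

lemma key_expand {S : ι → Type*} [∀ i, Fintype (S i)] [∀ i, DecidableEq (S i)]
    (u : ∀ _ : ι, (∀ j, S j) → ℝ) (ρ' : (∀ i, S i) → ℝ) (i : ι) (αi : S i → S i → ℝ) :
    ∑ s, ρ' s * Dgain u i s αi = - ∑ si, ∑ ti, αi si ti * devGain u ρ' i si ti := by
  have hti : ∀ ti : S i, ∑ si, αi si ti * devGain u ρ' i si ti
      = ∑ s, αi (s i) ti * (ρ' s * (u i s - u i (Function.update s i ti))) := by
    intro ti
    unfold devGain
    simp only [Finset.mul_sum, mul_ite, mul_zero]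
    rw [Finset.sum_comm]
    refine Finset.sum_congr rfl fun s _ => ?_
    rw [Finset.sum_ite_eq Finset.univ (s i)]
    simp
  calc ∑ s, ρ' s * Dgain u i s αi
      = ∑ s, ∑ ti, -(αi (s i) ti * (ρ' s * (u i s - u i (Function.update s i ti)))) := by
        refine Finset.sum_congr rfl fun s _ => ?_
        unfold Dgain
        rw [Finset.mul_sum]
        exact Finset.sum_congr rfl fun ti _ => by ring
    _ = -∑ s, ∑ ti, αi (s i) ti * (ρ' s * (u i s - u i (Function.update s i ti))) := by
        simp [Finset.sum_neg_distrib]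
    _ = -∑ ti, ∑ s, αi (s i) ti * (ρ' s * (u i s - u i (Function.update s i ti))) := by
        rw [Finset.sum_comm]
    _ = -∑ ti, ∑ si, αi si ti * devGain u ρ' i si ti :=
        congrArg Neg.neg (Finset.sum_congr rfl fun ti _ => (hti ti).symm)
    _ = -∑ si, ∑ ti, αi si ti * devGain u ρ' i si ti := by rw [Finset.sum_comm]

lemma devGain_self {S : ι → Type*} [∀ i, Fintype (S i)] [∀ i, DecidableEq (S i)]
    (u : ∀ _ : ι, (∀ j, S j) → ℝ) (ρ' : (∀ i, S i) → ℝ) (i : ι) (si : S i) :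
    devGain u ρ' i si si = 0 := by
  unfold devGain
  refine Finset.sum_eq_zero fun s _ => ?_
  split
  · next h => rw [← h, Function.update_eq_self]; ring
  · rfl

/-- If some `S^ρ`-restricted dual vector has strictly positive aggregate gain at some
profile, then the correlated equilibrium `ρ` is not correlated perfect. -/
theorem not_cpe_of_strict_dual {S : ι → Type*} [∀ i, Fintype (S i)] [∀ i, DecidableEq (S i)] (u : ∀ _ : ι, (∀ j, S j) → ℝ)
    (ρ : (∀ i, S i) → ℝ) (hce : IsCE u ρ) (α : ∀ i, S i → S i → ℝ)
    (hα : IsDualVector u α) (hres : RestrictedTo ρ α)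
    (hstrict : ∃ s' : ∀ j, S j, 0 < ∑ i, Dgain u i s' (α i)) :
    ¬ IsCPE u ρ := by
  rintro ⟨-, ρk, hmix, -, hbr⟩
  obtain ⟨s', hs'⟩ := hstrict
  set ρ0 := ρk 0 with hρ0
  have hpos : 0 < ∑ s, ρ0 s * ∑ i, Dgain u i s (α i) := by
    refine Finset.sum_pos' (fun s _ => mul_nonneg (le_of_lt ((hmix 0).2 s)) (hα.2 s)) ?_
    exact ⟨s', Finset.mem_univ _, mul_pos ((hmix 0).2 s') hs'⟩
  have hle : ∑ s, ρ0 s * ∑ i, Dgain u i s (α i) ≤ 0 := by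
    have : ∑ s, ρ0 s * ∑ i, Dgain u i s (α i)
        = ∑ i, ∑ s, ρ0 s * Dgain u i s (α i) := by
      rw [Finset.sum_comm]
      exact Finset.sum_congr rfl fun s _ => Finset.mul_sum _ _ _
    rw [this]
    refine Finset.sum_nonpos fun i _ => ?_
    rw [key_expand, neg_nonpos]
    refine Finset.sum_nonneg fun si _ => ?_
    by_cases h : 0 < marg ρ i si
    · exact Finset.sum_nonneg fun ti _ =>
        mul_nonneg ((hα.1 i si).1 ti) (hbr 0 i si h ti)
    · have := hres i si h
      simp only [this, ite_mul, one_mul, zero_mul]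
      rw [Finset.sum_ite_eq' Finset.univ si]
      simp [devGain_self]
  linarith
end

section
/- If for every S^ρ-restricted dual vector α and every profile s ∈ S the aggregate deviation gain ∑_{i∈N} D_i(s, α_i) equals zero, then the correlated equilibrium ρ is correlated perfect. -/
open Finset Filter Topology

variable {ι : Type*} [Fintype ι] [DecidableEq ι]

/-!
The deviations `si ↦ ti` of each player from a recommendation `si` in the support of `ρ` give
finitely many gain vectors `d_b` on profiles. A nonnegative combination `∑ y_b d_b ≥ 0` is, after
rescaling and completing each row by obedience, the aggregate gain of an `S^ρ`-restricted dual
vector, so by hypothesis it vanishes. Stiemke's theorem of the alternative (derived from Farkas'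
lemma) then yields a strictly positive `η` with `⟪d_b, η⟫ ≤ 0` for all `b`: normalised, `η` is a
completely mixed correlated strategy under which every recommendation in the support is a best
response. Mixing it into `ρ` with weight `1/(k+1)` gives the sequence witnessing perfection.
-/

theorem farkas {E κ : Type*} [Fintype E] [DecidableEq κ] (s : Finset κ) (d : κ → E → ℝ)
    (c : E → ℝ) :
    (∃ y : κ → ℝ, (∀ i, 0 ≤ y i) ∧ c = ∑ i ∈ s, y i • d i) ∨
      ∃ x : E → ℝ, (∀ i ∈ s, d i ⬝ᵥ x ≤ 0) ∧ 0 < c ⬝ᵥ x := by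
  induction s using Finset.induction_on generalizing d c with
  | empty =>
    by_cases hc : c = 0
    · exact Or.inl ⟨0, fun _ => le_rfl, by simp [hc]⟩
    · refine Or.inr ⟨c, by simp, ?_⟩
      exact (Finset.sum_nonneg fun e _ => mul_self_nonneg (c e)).lt_of_ne'
        (dotProduct_self_eq_zero.not.mpr hc)
  | insert j s hj ih =>
    have hne : ∀ i ∈ s, i ≠ j := fun i hi h => hj (h ▸ hi)
    rcases ih d c with ⟨y, hy, hc⟩ | ⟨x, hx, hcx⟩
    · refine Or.inl ⟨Function.update y j 0, fun i => ?_, ?_⟩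
      · rcases eq_or_ne i j with rfl | h
        · simp
        · simpa [h] using hy i
      · rw [Finset.sum_insert hj, Function.update_self, zero_smul, zero_add, hc]
        exact Finset.sum_congr rfl fun i hi => by rw [Function.update_of_ne (hne i hi)]
    set a := d j ⬝ᵥ x with ha_def
    rcases le_or_gt a 0 with ha | ha
    · exact Or.inr ⟨x, Finset.forall_mem_insert _ _ _ |>.mpr ⟨ha, hx⟩, hcx⟩
    -- Project the remaining constraints onto the hyperplane `d j ⬝ᵥ x = 0` and recurse.
    rcases ih (fun i => a • d i - (d i ⬝ᵥ x) • d j) (a • c - (c ⬝ᵥ x) • d j) with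
      ⟨y, hy, hc⟩ | ⟨z, hz, hcz⟩
    · set μ := (c ⬝ᵥ x - ∑ i ∈ s, y i * (d i ⬝ᵥ x)) / a
      have hμ : 0 ≤ μ := by
        have : ∑ i ∈ s, y i * (d i ⬝ᵥ x) ≤ 0 :=
          Finset.sum_nonpos fun i hi => mul_nonpos_of_nonneg_of_nonpos (hy i) (hx i hi)
        exact div_nonneg (by linarith) ha.le
      refine Or.inl ⟨Function.update y j μ, fun i => ?_, ?_⟩
      · rcases eq_or_ne i j with rfl | h
        · simpa using hμ
        · simpa [h] using hy i
      rw [Finset.sum_insert hj, Function.update_self,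
        Finset.sum_congr rfl fun i hi => by rw [Function.update_of_ne (hne i hi)]]
      refine smul_right_injective _ ha.ne' ?_
      have haμ : a * μ = c ⬝ᵥ x - ∑ i ∈ s, y i * (d i ⬝ᵥ x) := mul_div_cancel₀ _ ha.ne'
      simp only [smul_sub, Finset.sum_sub_distrib, smul_smul, ← Finset.sum_smul,
        mul_comm (y _) a] at hc
      simp only [smul_add, smul_smul, haμ, Finset.smul_sum]
      linear_combination (norm := module) hc
    · refine Or.inr ⟨a • z - (d j ⬝ᵥ z) • x, ?_, ?_⟩
      · refine Finset.forall_mem_insert _ _ _ |>.mpr ⟨?_, fun i hi => ?_⟩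
        · simp only [dotProduct_sub, dotProduct_smul, smul_eq_mul]
          rw [← ha_def, mul_comm, sub_self]
        · have := hz i hi
          simp only [sub_dotProduct, smul_dotProduct, smul_eq_mul] at this
          simp only [dotProduct_sub, dotProduct_smul, smul_eq_mul]
          linarith [dotProduct_comm (d j) z]
      · simp only [sub_dotProduct, smul_dotProduct, smul_eq_mul] at hcz
        simp only [dotProduct_sub, dotProduct_smul, smul_eq_mul]
        linarith [dotProduct_comm (d j) z]

theorem exists_nonneg_pos_at_forall_dotProduct_nonpos {E κ : Type*} [Fintype E] [Fintype κ]
    (d : κ → E → ℝ) (h : ∀ y : κ → ℝ, (∀ b, 0 ≤ y b) → 0 ≤ ∑ b, y b • d b → ∑ b, y b • d b = 0)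
    (e₀ : E) : ∃ x : E → ℝ, 0 ≤ x ∧ 0 < x e₀ ∧ ∀ b, d b ⬝ᵥ x ≤ 0 := by
  classical
  rcases farkas Finset.univ (Sum.elim d fun e => -Pi.single e 1) (Pi.single e₀ 1) with
    ⟨y, hy, hrep⟩ | ⟨x, hx, hx₀⟩
  · have hw : ∑ b, y (.inl b) • d b = Pi.single e₀ 1 + fun e => y (.inr e) := by
      have hsingle : ∑ e, y (.inr e) • Pi.single e (1 : ℝ) = fun e => y (.inr e) := by
        ext e
        simp [Finset.sum_apply, Pi.single_apply]
      simp only [Fintype.sum_sum_type, Sum.elim_inl, Sum.elim_inr, smul_neg,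
        Finset.sum_neg_distrib] at hrep
      rw [← hsingle, hrep]
      abel
    have hw₀ : 0 ≤ ∑ b, y (.inl b) • d b :=
      hw ▸ add_nonneg (Pi.single_nonneg.mpr zero_le_one) fun e => hy (.inr e)
    have := congrFun (h _ (fun b => hy (.inl b)) hw₀) e₀
    rw [hw] at this
    simp at this
    linarith [hy (.inr e₀)]
  · refine ⟨x, fun e => ?_, by simpa using hx₀, fun b => hx (.inl b) (Finset.mem_univ _)⟩
    simpa using hx (.inr e) (Finset.mem_univ _)

theorem exists_pos_forall_dotProduct_nonpos {E κ : Type*} [Fintype E] [Fintype κ]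
    (d : κ → E → ℝ) (h : ∀ y : κ → ℝ, (∀ b, 0 ≤ y b) → 0 ≤ ∑ b, y b • d b → ∑ b, y b • d b = 0) :
    ∃ η : E → ℝ, (∀ e, 0 < η e) ∧ ∀ b, d b ⬝ᵥ η ≤ 0 := by
  choose x hx hx_pos hxd using exists_nonneg_pos_at_forall_dotProduct_nonpos d h
  refine ⟨∑ e, x e, fun e => ?_, fun b => ?_⟩
  · rw [Finset.sum_apply]
    exact Finset.sum_pos' (fun e' _ => hx e' e) ⟨e, Finset.mem_univ _, hx_pos e⟩
  · rw [dotProduct_sum]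
    exact Finset.sum_nonpos fun e _ => hxd e b

lemma IsDist.nonempty {S : ι → Type*} [∀ i, Fintype (S i)] {ρ : (∀ i, S i) → ℝ}
    (hρ : IsDist ρ) : Nonempty (∀ i, S i) := by
  by_contra h
  rw [not_nonempty_iff] at h
  simpa using hρ.2

def withObedience {A : Type*} [Fintype A] [DecidableEq A] (z : A → A → ℝ) (a b : A) : ℝ :=
  z a b + if b = a then 1 - ∑ t, z a t else 0

lemma withObedience_nonneg_and_sum_eq_one {A : Type*} [Fintype A] [DecidableEq A]
    {z : A → A → ℝ} {a : A} (hz : ∀ b, 0 ≤ z a b) (hz_sum : ∑ b, z a b ≤ 1) :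
    (∀ b, 0 ≤ withObedience z a b) ∧ ∑ b, withObedience z a b = 1 := by
  refine ⟨fun b => add_nonneg (hz b) ?_, by simp [withObedience, Finset.sum_add_distrib]⟩
  split_ifs <;> linarith

section Game

variable {S : ι → Type*} [∀ i, Fintype (S i)] [∀ i, DecidableEq (S i)]
  (u : ∀ _ : ι, (∀ j, S j) → ℝ)

lemma devGain_add_smul (a b : ℝ) (ρ τ : (∀ i, S i) → ℝ) (i : ι) (si ti : S i) :
    devGain u (a • ρ + b • τ) i si ti = a * devGain u ρ i si ti + b * devGain u τ i si ti := by
  simp only [devGain, Finset.mul_sum, ← Finset.sum_add_distrib]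
  refine Finset.sum_congr rfl fun s _ => ?_
  simp only [Pi.add_apply, Pi.smul_apply, smul_eq_mul]
  split_ifs <;> ring

lemma IsCE.isCPE_of_completelyMixed {ρ τ : (∀ i, S i) → ℝ} (hρ : IsCE u ρ) (hτ : IsDist τ)
    (hτ_mixed : CompletelyMixed τ)
    (hτ_dev : ∀ i si, 0 < marg ρ i si → ∀ ti, 0 ≤ devGain u τ i si ti) : IsCPE u ρ := by
  obtain ⟨⟨hρ_nonneg, hρ_sum⟩, hρ_dev⟩ := hρ
  set ε : ℕ → ℝ := fun k => 1 / ((k : ℝ) + 1)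
  have hε_pos (k : ℕ) : 0 < ε k := Nat.one_div_pos_of_nat
  have hε_le (k : ℕ) : ε k ≤ 1 := Nat.one_div_le_one_div (Nat.zero_le k) |>.trans_eq (by simp)
  refine ⟨⟨hρ_nonneg, hρ_sum⟩, fun k => (1 - ε k) • ρ + ε k • τ,
    fun k => ⟨⟨fun s => ?_, ?_⟩, fun s => ?_⟩, fun s => ?_, fun k i si hsi ti => ?_⟩
  · exact add_nonneg (mul_nonneg (sub_nonneg.mpr (hε_le k)) (hρ_nonneg s))
      (mul_nonneg (hε_pos k).le (hτ.1 s))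
  · simp [Finset.sum_add_distrib, ← Finset.mul_sum, hρ_sum, hτ.2]
  · exact add_pos_of_nonneg_of_pos (mul_nonneg (sub_nonneg.mpr (hε_le k)) (hρ_nonneg s))
      (mul_pos (hε_pos k) (hτ_mixed s))
  · have hε : Tendsto ε atTop (𝓝 0) := tendsto_one_div_add_atTop_nhds_zero_nat
    simpa using (((tendsto_const_nhds (x := (1 : ℝ))).sub hε).mul_const (ρ s)).add
      (hε.mul_const (τ s))
  · rw [devGain_add_smul]
    exact add_nonneg (mul_nonneg (sub_nonneg.mpr (hε_le k)) (hρ_dev i si ti))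
      (mul_nonneg (hε_pos k).le (hτ_dev i si hsi ti))

/-- The gain vector `d_⟨i, (si, ti)⟩`; deviations from recommendations outside `S_i^ρ` are
discarded. -/
noncomputable def restrictedGain (ρ : (∀ i, S i) → ℝ) (b : Σ i, S i × S i) (s : ∀ j, S j) : ℝ :=
  if 0 < marg ρ b.1 b.2.1 ∧ s b.1 = b.2.1 then u b.1 (Function.update s b.1 b.2.2) - u b.1 s
  else 0

lemma devGain_eq_neg_restrictedGain_dotProduct {ρ : (∀ i, S i) → ℝ} {i : ι} {si : S i}
    (hsi : 0 < marg ρ i si) (ti : S i) (τ : (∀ i, S i) → ℝ) :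
    devGain u τ i si ti = -(restrictedGain u ρ ⟨i, (si, ti)⟩ ⬝ᵥ τ) := by
  rw [dotProduct, ← Finset.sum_neg_distrib]
  refine Finset.sum_congr rfl fun s _ => ?_
  simp only [restrictedGain, hsi, true_and]
  split_ifs <;> ring

lemma sum_smul_restrictedGain_apply (ρ : (∀ i, S i) → ℝ) (y : (Σ i, S i × S i) → ℝ)
    (s : ∀ j, S j) :
    (∑ b, y b • restrictedGain u ρ b) s = ∑ i, ∑ ti,
      (if 0 < marg ρ i (s i) then y ⟨i, (s i, ti)⟩ else 0) *
        (u i (Function.update s i ti) - u i s) := by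
  rw [Finset.sum_apply, Fintype.sum_sigma]
  refine Finset.sum_congr rfl fun i _ => ?_
  rw [Fintype.sum_prod_type, Finset.sum_comm]
  refine Finset.sum_congr rfl fun ti _ => ?_
  rw [Finset.sum_eq_single (s i) (fun si _ hsi => by simp [restrictedGain, Ne.symm hsi])
    (by simp)]
  simp [restrictedGain, mul_ite]

lemma sum_Dgain_withObedience (z : ∀ i, S i → S i → ℝ) (s : ∀ j, S j) :
    ∑ i, Dgain u i s (withObedience (z i)) =
      ∑ i, ∑ ti, z i (s i) ti * (u i (Function.update s i ti) - u i s) := by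
  simp [Dgain, withObedience, add_mul, Finset.sum_add_distrib, ite_mul]

lemma sum_smul_restrictedGain_eq_zero {ρ : (∀ i, S i) → ℝ}
    (hdual : ∀ α : ∀ i, S i → S i → ℝ, IsDualVector u α → RestrictedTo ρ α →
      ∀ s : ∀ j, S j, ∑ i, Dgain u i s (α i) = 0)
    (y : (Σ i, S i × S i) → ℝ) (hy : ∀ b, 0 ≤ y b) (hg : 0 ≤ ∑ b, y b • restrictedGain u ρ b) :
    ∑ b, y b • restrictedGain u ρ b = 0 := by
  set M := 1 + ∑ b, y b
  have hM : 0 < M := add_pos_of_pos_of_nonneg one_pos (Finset.sum_nonneg fun b _ => hy b)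
  have hy_le (i : ι) (si : S i) : ∑ ti, y ⟨i, (si, ti)⟩ ≤ ∑ b, y b := by
    rw [Fintype.sum_sigma]
    calc ∑ ti, y ⟨i, (si, ti)⟩ ≤ ∑ p : S i × S i, y ⟨i, p⟩ := by
          rw [Fintype.sum_prod_type]
          exact Finset.single_le_sum (f := fun si => ∑ ti, y ⟨i, (si, ti)⟩)
            (fun _ _ => Finset.sum_nonneg fun _ _ => hy _) (Finset.mem_univ si)
      _ ≤ ∑ j, ∑ p : S j × S j, y ⟨j, p⟩ :=
          Finset.single_le_sum (f := fun j => ∑ p : S j × S j, y ⟨j, p⟩)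
            (fun _ _ => Finset.sum_nonneg fun _ _ => hy _) (Finset.mem_univ i)
  -- Rescaling `y` by `M` makes every row of deviation weights sub-stochastic.
  set z : ∀ i, S i → S i → ℝ := fun i si ti => if 0 < marg ρ i si then y ⟨i, (si, ti)⟩ / M else 0
  set α : ∀ i, S i → S i → ℝ := fun i => withObedience (z i)
  have hgain (s : ∀ j, S j) :
      (∑ b, y b • restrictedGain u ρ b) s = M * ∑ i, Dgain u i s (α i) := by
    rw [sum_Dgain_withObedience, sum_smul_restrictedGain_apply, Finset.mul_sum]
    refine Finset.sum_congr rfl fun i _ => ?_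
    rw [Finset.mul_sum]
    refine Finset.sum_congr rfl fun ti _ => ?_
    simp only [z]
    split_ifs
    · field_simp
    · simp
  have hz (i : ι) (si : S i) : (∀ ti, 0 ≤ z i si ti) ∧ ∑ ti, z i si ti ≤ 1 := by
    simp only [z]
    split_ifs
    · refine ⟨fun ti => div_nonneg (hy _) hM.le, ?_⟩
      rw [← Finset.sum_div, div_le_one hM]
      linarith [hy_le i si]
    · simp
  have hα : IsDualVector u α :=
    ⟨fun i si => withObedience_nonneg_and_sum_eq_one (hz i si).1 (hz i si).2,
      fun s => (mul_nonneg_iff_of_pos_left hM).mp (hgain s ▸ hg s)⟩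
  have hα_restricted : RestrictedTo ρ α := fun i si hsi ti => by
    simp [α, withObedience, z, hsi]
  funext s
  rw [hgain, hdual α hα hα_restricted s, mul_zero, Pi.zero_apply]

lemma exists_completelyMixed_devGain_nonneg [Nonempty (∀ i, S i)] {ρ : (∀ i, S i) → ℝ}
    (hdual : ∀ α : ∀ i, S i → S i → ℝ, IsDualVector u α → RestrictedTo ρ α →
      ∀ s : ∀ j, S j, ∑ i, Dgain u i s (α i) = 0) :
    ∃ τ, IsDist τ ∧ CompletelyMixed τ ∧
      ∀ i si, 0 < marg ρ i si → ∀ ti, 0 ≤ devGain u τ i si ti := by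
  obtain ⟨η, hη_pos, hη⟩ := exists_pos_forall_dotProduct_nonpos (restrictedGain u ρ)
    (sum_smul_restrictedGain_eq_zero u hdual)
  have hη_sum : 0 < ∑ s, η s := Finset.sum_pos (fun s _ => hη_pos s) Finset.univ_nonempty
  refine ⟨(∑ s, η s)⁻¹ • η, ⟨fun s => ?_, ?_⟩, fun s => ?_, fun i si hsi ti => ?_⟩
  · exact mul_nonneg (inv_nonneg.mpr hη_sum.le) (hη_pos s).le
  · simp [← Finset.mul_sum, hη_sum.ne']
  · exact mul_pos (inv_pos.mpr hη_sum) (hη_pos s)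
  · rw [devGain_eq_neg_restrictedGain_dotProduct u hsi, dotProduct_smul, smul_eq_mul, neg_nonneg]
    exact mul_nonpos_of_nonneg_of_nonpos (inv_nonneg.mpr hη_sum.le) (hη _)

end Game

/-- If every `S^ρ`-restricted dual vector has zero aggregate gain at every profile,
then the correlated equilibrium `ρ` is correlated perfect. -/
theorem cpe_of_dual_eq_zero {S : ι → Type*} [∀ i, Fintype (S i)] [∀ i, DecidableEq (S i)] (u : ∀ _ : ι, (∀ j, S j) → ℝ)
    (ρ : (∀ i, S i) → ℝ) (hce : IsCE u ρ)
    (hdual : ∀ α : ∀ i, S i → S i → ℝ, IsDualVector u α → RestrictedTo ρ α →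
      ∀ s : ∀ j, S j, ∑ i, Dgain u i s (α i) = 0) :
    IsCPE u ρ := by
  have := hce.1.nonempty
  obtain ⟨τ, hτ, hτ_mixed, hτ_dev⟩ := exists_completelyMixed_devGain_nonneg u hdual
  exact hce.isCPE_of_completelyMixed u hτ hτ_mixed hτ_dev
end

section
/- A correlated equilibrium ρ of a finite normal-form game is correlated perfect if and only if every S^ρ-restricted dual vector α satisfies ∑_{i∈N} D_i(s, α_i) = 0 for all strategy profiles s ∈ S. -/
open Finset Filter Topology

variable {ι : Type*} [Fintype ι] [DecidableEq ι]

/-! ### Auxiliary material: Farkas' lemma -/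

/-- Dot product on a finite index type. -/
def pdot {V : Type*} [Fintype V] (x y : V → ℝ) : ℝ := ∑ s, x s * y s

lemma pdot_sub_smul_right {V : Type*} [Fintype V] (x z y : V → ℝ) (t : ℝ) :
    pdot x (fun s => z s - t * y s) = pdot x z - t * pdot x y := by
  simp only [pdot, Finset.mul_sum, ← Finset.sum_sub_distrib]
  exact Finset.sum_congr rfl fun s _ => by ring

lemma pdot_sub_smul_left {V : Type*} [Fintype V] (x z y : V → ℝ) (t : ℝ) :
    pdot (fun s => x s - t * z s) y = pdot x y - t * pdot z y := by
  simp only [pdot, Finset.mul_sum, ← Finset.sum_sub_distrib]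
  exact Finset.sum_congr rfl fun s _ => by ring

/-- Farkas' lemma (dichotomy form), by induction on the number of generators. -/
lemma farkas_fin {V : Type*} [Fintype V] :
    ∀ (m : ℕ) (v : Fin m → V → ℝ) (b : V → ℝ),
    (∃ c : Fin m → ℝ, (∀ i, 0 ≤ c i) ∧ ∀ s, b s = ∑ i, c i * v i s) ∨
    (∃ y : V → ℝ, (∀ i, pdot (v i) y ≤ 0) ∧ 0 < pdot b y) := by
  intro m
  induction m with
  | zero =>
    intro v b
    by_cases hb : ∀ s, b s = 0
    · exact Or.inl ⟨0, fun i => le_refl _, fun s => by simp [hb s]⟩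
    · push_neg at hb
      obtain ⟨s₀, hs₀⟩ := hb
      refine Or.inr ⟨b, fun i => i.elim0, ?_⟩
      exact Finset.sum_pos' (fun s _ => mul_self_nonneg _)
        ⟨s₀, Finset.mem_univ _, mul_self_pos.mpr hs₀⟩
  | succ m ih =>
    intro v b
    rcases ih (fun i => v i.succ) b with ⟨c, hc, hb⟩ | ⟨y, hy, hby⟩
    · refine Or.inl ⟨Fin.cons 0 c, ?_, ?_⟩
      · intro i
        refine Fin.cases ?_ ?_ i
        · simp
        · intro j; simpa using hc j
      · intro s
        rw [Fin.sum_univ_succ]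
        simpa using hb s
    · by_cases h0 : pdot (v 0) y ≤ 0
      · refine Or.inr ⟨y, ?_, hby⟩
        intro i
        exact Fin.cases h0 hy i
      · push_neg at h0
        set p := pdot (v 0) y with hp
        have hpne : p ≠ 0 := ne_of_gt h0
        rcases ih (fun i s => v i.succ s - (pdot (v i.succ) y / p) * v 0 s)
            (fun s => b s - (pdot b y / p) * v 0 s) with ⟨c, hc, hb'⟩ | ⟨z, hz, hbz⟩
        · set μ : ℝ := pdot b y / p - ∑ i, c i * (pdot (v i.succ) y / p) with hμ
          have hμ0 : 0 ≤ μ := by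
            have h1 : 0 < pdot b y / p := div_pos hby h0
            have h2 : ∑ i, c i * (pdot (v i.succ) y / p) ≤ 0 := by
              apply Finset.sum_nonpos
              intro i _
              exact mul_nonpos_of_nonneg_of_nonpos (hc i)
                (div_nonpos_of_nonpos_of_nonneg (hy i) (le_of_lt h0))
            rw [hμ]; linarith
          refine Or.inl ⟨Fin.cons μ c, ?_, ?_⟩
          · intro i
            refine Fin.cases ?_ ?_ i
            · simpa using hμ0
            · intro j; simpa using hc j
          · intro s
            have h3 := hb' s
            have h4 : ∑ i, c i * (v i.succ s - pdot (v i.succ) y / p * v 0 s)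
                = ∑ i, c i * v i.succ s - (∑ i, c i * (pdot (v i.succ) y / p)) * v 0 s := by
              rw [Finset.sum_mul, ← Finset.sum_sub_distrib]
              exact Finset.sum_congr rfl fun i _ => by ring
            rw [Fin.sum_univ_succ]
            simp only [Fin.cons_zero, Fin.cons_succ]
            rw [h4] at h3
            rw [hμ]; linarith
        · refine Or.inr ⟨fun s => z s - (pdot (v 0) z / p) * y s, ?_, ?_⟩
          · intro i
            refine Fin.cases ?_ ?_ i
            · rw [pdot_sub_smul_right, ← hp, div_mul_cancel₀ _ hpne, sub_self]
            · intro j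
              have h5 := hz j
              rw [pdot_sub_smul_left] at h5
              rw [pdot_sub_smul_right]
              have heq : pdot (v 0) z / p * pdot (v j.succ) y
                  = pdot (v j.succ) y / p * pdot (v 0) z := by ring
              linarith [heq ▸ h5]
          · have h6 := hbz
            rw [pdot_sub_smul_left] at h6
            rw [pdot_sub_smul_right]
            have heq : pdot (v 0) z / p * pdot b y = pdot b y / p * pdot (v 0) z := by ring
            linarith

/-- Farkas' lemma over an arbitrary finite index type. -/
lemma farkas_s10 {V R : Type*} [Fintype V] [Fintype R] (v : R → V → ℝ) (b : V → ℝ) :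
    (∃ c : R → ℝ, (∀ r, 0 ≤ c r) ∧ ∀ s, b s = ∑ r, c r * v r s) ∨
    (∃ y : V → ℝ, (∀ r, pdot (v r) y ≤ 0) ∧ 0 < pdot b y) := by
  set e := Fintype.equivFin R with he
  rcases farkas_fin (Fintype.card R) (fun i => v (e.symm i)) b with ⟨c, hc, hb⟩ | ⟨y, hy, hby⟩
  · refine Or.inl ⟨fun r => c (e r), fun r => hc _, fun s => ?_⟩
    rw [hb s]
    exact Fintype.sum_equiv e.symm _ _ (fun i => by simp)
  · refine Or.inr ⟨y, fun r => ?_, hby⟩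
    simpa using hy (e r)

/-! ### Auxiliary lemmas about `devGain` and `Dgain` -/

section Helpers

variable {S : ι → Type*} [∀ i, Fintype (S i)] [∀ i, DecidableEq (S i)]
  (u : ∀ _ : ι, (∀ j, S j) → ℝ)

lemma devGain_diag (ν : (∀ i, S i) → ℝ) (i : ι) (si : S i) :
    devGain u ν i si si = 0 := by
  refine Finset.sum_eq_zero fun s _ => ?_
  by_cases h : s i = si
  · rw [if_pos h, ← h, Function.update_eq_self, sub_self, mul_zero]
  · rw [if_neg h]

lemma devGain_affine (a c : ℝ) (ρ₁ ρ₂ : (∀ i, S i) → ℝ) (i : ι) (si ti : S i) :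
    devGain u (fun s => a * ρ₁ s + c * ρ₂ s) i si ti
      = a * devGain u ρ₁ i si ti + c * devGain u ρ₂ i si ti := by
  simp only [devGain, Finset.mul_sum, mul_ite, mul_zero, ← Finset.sum_add_distrib]
  exact Finset.sum_congr rfl fun s _ => by split <;> ring

lemma devGain_smul (a : ℝ) (σ : (∀ i, S i) → ℝ) (i : ι) (si ti : S i) :
    devGain u (fun s => a * σ s) i si ti = a * devGain u σ i si ti := by
  simp only [devGain, Finset.mul_sum, mul_ite, mul_zero]
  exact Finset.sum_congr rfl fun s _ => by split <;> ring

lemma devGain_fsum {T : Type*} [Fintype T] (f : T → (∀ i, S i) → ℝ) (i : ι) (si ti : S i) :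
    devGain u (fun s => ∑ t, f t s) i si ti = ∑ t, devGain u (f t) i si ti := by
  simp only [devGain]
  rw [Finset.sum_comm]
  refine Finset.sum_congr rfl fun s _ => ?_
  by_cases h : s i = si
  · simp only [if_pos h, Finset.sum_mul]
  · simp only [if_neg h, Finset.sum_const_zero]

lemma exp_gain (ν : (∀ i, S i) → ℝ) (i : ι) (αi : S i → S i → ℝ) :
    ∑ s, ν s * Dgain u i s αi = -∑ si, ∑ ti, αi si ti * devGain u ν i si ti := by
  have L1 : ∑ s, ν s * Dgain u i s αi
      = ∑ ti, ∑ s : ∀ j, S j, αi (s i) ti * (ν s * (u i (Function.update s i ti) - u i s)) := by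
    simp only [Dgain, Finset.mul_sum]
    rw [Finset.sum_comm]
    exact Finset.sum_congr rfl fun ti _ => Finset.sum_congr rfl fun s _ => by ring
  have L2 : ∑ si, ∑ ti, αi si ti * devGain u ν i si ti
      = ∑ ti, ∑ s : ∀ j, S j, αi (s i) ti * (ν s * (u i s - u i (Function.update s i ti))) := by
    have h1 : ∀ si ti, αi si ti * devGain u ν i si ti
        = ∑ s : ∀ j, S j, if s i = si then
            αi si ti * (ν s * (u i s - u i (Function.update s i ti))) else 0 := by
      intro si ti
      rw [devGain, Finset.mul_sum]
      refine Finset.sum_congr rfl fun s _ => ?_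
      by_cases h : s i = si
      · rw [if_pos h, if_pos h]
      · rw [if_neg h, if_neg h, mul_zero]
    calc ∑ si, ∑ ti, αi si ti * devGain u ν i si ti
        = ∑ si, ∑ ti, ∑ s : ∀ j, S j, if s i = si then
            αi si ti * (ν s * (u i s - u i (Function.update s i ti))) else 0 :=
          Finset.sum_congr rfl fun si _ => Finset.sum_congr rfl fun ti _ => h1 si ti
      _ = ∑ ti, ∑ si, ∑ s : ∀ j, S j, if s i = si then
            αi si ti * (ν s * (u i s - u i (Function.update s i ti))) else 0 :=
          Finset.sum_comm
      _ = ∑ ti, ∑ s : ∀ j, S j, ∑ si, if s i = si then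
            αi si ti * (ν s * (u i s - u i (Function.update s i ti))) else 0 :=
          Finset.sum_congr rfl fun ti _ => Finset.sum_comm
      _ = ∑ ti, ∑ s : ∀ j, S j, αi (s i) ti * (ν s * (u i s - u i (Function.update s i ti))) := by
          refine Finset.sum_congr rfl fun ti _ => Finset.sum_congr rfl fun s _ => ?_
          exact Fintype.sum_ite_eq (s i) _
  rw [L1, L2, ← Finset.sum_neg_distrib]
  refine Finset.sum_congr rfl fun ti _ => ?_
  rw [← Finset.sum_neg_distrib]
  exact Finset.sum_congr rfl fun s _ => by ring

/-- Forward direction: a correlated perfect equilibrium kills every restricted dual vector. -/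
lemma cpe_forward (ρ : (∀ i, S i) → ℝ) (hcpe : IsCPE u ρ) :
    ∀ α : ∀ i, S i → S i → ℝ, IsDualVector u α → RestrictedTo ρ α →
      ∀ s : ∀ j, S j, ∑ i, Dgain u i s (α i) = 0 := by
  obtain ⟨hdist, ρk, hk, hlim, hbr⟩ := hcpe
  intro α hα hres s₀
  set ν := ρk 0 with hν
  have hνmix : CompletelyMixed ν := (hk 0).2
  have key : ∑ s, ν s * (∑ i, Dgain u i s (α i))
      = -(∑ i, ∑ si, ∑ ti, α i si ti * devGain u ν i si ti) := by
    calc ∑ s, ν s * (∑ i, Dgain u i s (α i))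
        = ∑ s, ∑ i, ν s * Dgain u i s (α i) :=
          Finset.sum_congr rfl fun s _ => Finset.mul_sum _ _ _
      _ = ∑ i, ∑ s, ν s * Dgain u i s (α i) := Finset.sum_comm
      _ = ∑ i, -(∑ si, ∑ ti, α i si ti * devGain u ν i si ti) :=
          Finset.sum_congr rfl fun i _ => exp_gain u ν i (α i)
      _ = -(∑ i, ∑ si, ∑ ti, α i si ti * devGain u ν i si ti) := by
          rw [Finset.sum_neg_distrib]
  have hinner : ∀ i (si : S i), 0 ≤ ∑ ti, α i si ti * devGain u ν i si ti := by
    intro i si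
    by_cases hsupp : 0 < marg ρ i si
    · exact Finset.sum_nonneg fun ti _ =>
        mul_nonneg ((hα.1 i si).1 ti) (hbr 0 i si hsupp ti)
    · have hres' := hres i si hsupp
      have heq : ∑ ti, α i si ti * devGain u ν i si ti = devGain u ν i si si := by
        calc ∑ ti, α i si ti * devGain u ν i si ti
            = ∑ ti, if ti = si then devGain u ν i si ti else 0 := by
              refine Finset.sum_congr rfl fun ti _ => ?_
              rw [hres' ti]
              by_cases h : ti = si
              · rw [if_pos h, if_pos h, one_mul]
              · rw [if_neg h, if_neg h, zero_mul]
          _ = devGain u ν i si si := Fintype.sum_ite_eq' si _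
      rw [heq, devGain_diag]
  have h2 : ∑ s, ν s * (∑ i, Dgain u i s (α i)) ≤ 0 := by
    rw [key, neg_nonpos]
    exact Finset.sum_nonneg fun i _ => Finset.sum_nonneg fun si _ => hinner i si
  have h3 : ∀ s, 0 ≤ ν s * (∑ i, Dgain u i s (α i)) :=
    fun s => mul_nonneg (le_of_lt (hνmix s)) (hα.2 s)
  have h4 : ∑ s, ν s * (∑ i, Dgain u i s (α i)) = 0 :=
    le_antisymm h2 (Finset.sum_nonneg fun s _ => h3 s)
  have h5 := (Finset.sum_eq_zero_iff_of_nonneg fun s _ => h3 s).1 h4 s₀ (Finset.mem_univ _)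
  rcases mul_eq_zero.1 h5 with h | h
  · exact absurd h (ne_of_gt (hνmix s₀))
  · exact h

/-- From nonnegative weights on deviation triples, build a restricted deviation-plan profile
whose aggregate gain is a positive multiple of the weighted gain. -/
lemma dual_from_weights (ρ : (∀ i, S i) → ℝ)
    (y : (Σ i : ι, S i × S i) → ℝ) (hy0 : ∀ r, 0 ≤ y r) :
    ∃ α : ∀ i, S i → S i → ℝ, ∃ lam : ℝ, 0 < lam ∧
      (∀ i si, (∀ ti, 0 ≤ α i si ti) ∧ ∑ ti, α i si ti = 1) ∧
      RestrictedTo ρ α ∧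
      ∀ s, ∑ i, Dgain u i s (α i)
        = lam * ∑ i, (if 0 < marg ρ i (s i) then
            ∑ ti, y ⟨i, (s i, ti)⟩ * (u i (Function.update s i ti) - u i s) else 0) := by
  classical
  set Ytot : ℝ := ∑ r, y r with hYtot_def
  have hYtot : 0 ≤ Ytot := Finset.sum_nonneg fun r _ => hy0 r
  have h1p : (0:ℝ) < 1 + Ytot := by linarith
  set lam : ℝ := (1 + Ytot)⁻¹ with hlam_def
  have hlam : 0 < lam := inv_pos.mpr h1p
  have hYsum_le : ∀ (i : ι) (si : S i), ∑ ti, y ⟨i, (si, ti)⟩ ≤ Ytot := by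
    intro i si
    have step1 : ∑ ti, y ⟨i, (si, ti)⟩ ≤ ∑ p : S i × S i, y ⟨i, p⟩ := by
      rw [Fintype.sum_prod_type]
      exact Finset.single_le_sum (f := fun si' => ∑ ti, y ⟨i, (si', ti)⟩)
        (fun si' _ => Finset.sum_nonneg fun ti _ => hy0 _) (Finset.mem_univ si)
    have step2 : ∑ p : S i × S i, y ⟨i, p⟩ ≤ Ytot := by
      have h : Ytot = ∑ i', ∑ p : S i' × S i', y ⟨i', p⟩ := by
        rw [hYtot_def, ← Finset.univ_sigma_univ, Finset.sum_sigma]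
      rw [h]
      exact Finset.single_le_sum (f := fun i' => ∑ p : S i' × S i', y ⟨i', p⟩)
        (fun i' _ => Finset.sum_nonneg fun p _ => hy0 _) (Finset.mem_univ i)
    linarith
  have hlam_le : ∀ (i : ι) (si : S i), lam * ∑ ti, y ⟨i, (si, ti)⟩ ≤ 1 := by
    intro i si
    have h1 : lam * ∑ ti, y ⟨i, (si, ti)⟩ = (∑ ti, y ⟨i, (si, ti)⟩) / (1 + Ytot) := by
      rw [hlam_def, div_eq_mul_inv, mul_comm]
    rw [h1, div_le_one h1p]
    have := hYsum_le i si
    linarith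
  refine ⟨fun i si ti => if 0 < marg ρ i si then
      lam * y ⟨i, (si, ti)⟩ + (if ti = si then 1 - lam * ∑ ti', y ⟨i, (si, ti')⟩ else 0)
    else (if ti = si then 1 else 0), lam, hlam, ?_, ?_, ?_⟩
  · intro i si
    constructor
    · intro ti
      by_cases hm : 0 < marg ρ i si
      · simp only [if_pos hm]
        refine add_nonneg (mul_nonneg hlam.le (hy0 _)) ?_
        by_cases h : ti = si
        · rw [if_pos h]
          have := hlam_le i si
          linarith
        · rw [if_neg h]
      · simp only [if_neg hm]
        by_cases h : ti = si
        · rw [if_pos h]; norm_num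
        · rw [if_neg h]
    · by_cases hm : 0 < marg ρ i si
      · simp only [if_pos hm]
        rw [Finset.sum_add_distrib, ← Finset.mul_sum]
        have h2 : ∑ ti, (if ti = si then 1 - lam * ∑ ti', y ⟨i, (si, ti')⟩ else 0)
            = 1 - lam * ∑ ti', y ⟨i, (si, ti')⟩ := Fintype.sum_ite_eq' si _
        rw [h2]; ring
      · simp only [if_neg hm]
        exact Fintype.sum_ite_eq' si (fun _ => (1:ℝ))
  · intro i si hm ti
    simp only [if_neg hm]
  · intro s
    rw [Finset.mul_sum]
    refine Finset.sum_congr rfl fun i _ => ?_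
    by_cases hm : 0 < marg ρ i (s i)
    · rw [if_pos hm]
      calc Dgain u i s (fun si ti => if 0 < marg ρ i si then
              lam * y ⟨i, (si, ti)⟩ + (if ti = si then 1 - lam * ∑ ti', y ⟨i, (si, ti')⟩ else 0)
            else (if ti = si then 1 else 0))
          = ∑ ti, (lam * y ⟨i, (s i, ti)⟩ * (u i (Function.update s i ti) - u i s)
              + (if ti = s i then (1 - lam * ∑ ti', y ⟨i, (s i, ti')⟩)
                  * (u i (Function.update s i ti) - u i s) else 0)) := by
            rw [Dgain]
            refine Finset.sum_congr rfl fun ti _ => ?_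
            simp only [if_pos hm]
            by_cases h : ti = s i
            · rw [if_pos h, if_pos h]; ring
            · rw [if_neg h, if_neg h]; ring
        _ = (∑ ti, lam * y ⟨i, (s i, ti)⟩ * (u i (Function.update s i ti) - u i s))
              + (1 - lam * ∑ ti', y ⟨i, (s i, ti')⟩)
                  * (u i (Function.update s i (s i)) - u i s) := by
            rw [Finset.sum_add_distrib]
            congr 1
            exact Fintype.sum_ite_eq' (s i) _
        _ = lam * ∑ ti, y ⟨i, (s i, ti)⟩ * (u i (Function.update s i ti) - u i s) := by
            rw [Function.update_eq_self, sub_self, mul_zero, add_zero, Finset.mul_sum]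
            exact Finset.sum_congr rfl fun ti _ => (mul_assoc _ _ _)
    · rw [if_neg hm, mul_zero]
      calc Dgain u i s (fun si ti => if 0 < marg ρ i si then
              lam * y ⟨i, (si, ti)⟩ + (if ti = si then 1 - lam * ∑ ti', y ⟨i, (si, ti')⟩ else 0)
            else (if ti = si then 1 else 0))
          = ∑ ti, (if ti = s i then u i (Function.update s i ti) - u i s else 0) := by
            rw [Dgain]
            refine Finset.sum_congr rfl fun ti _ => ?_
            simp only [if_neg hm]
            by_cases h : ti = s i
            · rw [if_pos h, if_pos h, one_mul]
            · rw [if_neg h, if_neg h, zero_mul]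
        _ = u i (Function.update s i (s i)) - u i s := Fintype.sum_ite_eq' (s i) _
        _ = 0 := by rw [Function.update_eq_self, sub_self]

/-- Key step of the converse: for every profile `sb` there is a nonnegative vector, positive
at `sb`, whose deviation gains at on-support strategies are all nonnegative. -/
lemma exists_good_sigma (ρ : (∀ i, S i) → ℝ)
    (hdual : ∀ α : ∀ i, S i → S i → ℝ, IsDualVector u α → RestrictedTo ρ α →
      ∀ s : ∀ j, S j, ∑ i, Dgain u i s (α i) = 0) (sb : ∀ j, S j) :
    ∃ σ : (∀ j, S j) → ℝ, (∀ s, 0 ≤ σ s) ∧ 0 < σ sb ∧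
      ∀ i si, 0 < marg ρ i si → ∀ ti : S i, 0 ≤ devGain u σ i si ti := by
  classical
  set v : ((Σ i : ι, S i × S i) ⊕ (∀ j, S j)) → (∀ j, S j) → ℝ :=
    Sum.elim
      (fun r s => if s r.1 = r.2.1 then
        (if 0 < marg ρ r.1 r.2.1 then u r.1 s - u r.1 (Function.update s r.1 r.2.2) else 0)
        else 0)
      (fun t s => if s = t then 1 else 0) with hv
  set b : (∀ j, S j) → ℝ := fun s => if s = sb then (-1:ℝ) else 0 with hb
  rcases farkas_s10 v b with ⟨c, hc, hbc⟩ | ⟨w, hw, hbw⟩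
  · exfalso
    set y : (Σ i : ι, S i × S i) → ℝ := fun r => c (Sum.inl r) with hy
    set z : (∀ j, S j) → ℝ := fun t => c (Sum.inr t) with hz
    have hb' : ∀ s, b s = (∑ r : Σ i : ι, S i × S i, y r * v (Sum.inl r) s) + z s := by
      intro s
      rw [hbc s, Fintype.sum_sum_type]
      congr 1
      calc ∑ t : ∀ j, S j, c (Sum.inr t) * v (Sum.inr t) s
          = ∑ t : ∀ j, S j, if s = t then z t else 0 := by
            refine Finset.sum_congr rfl fun t _ => ?_
            simp only [hv, Sum.elim_inr, hz]
            by_cases h : s = t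
            · rw [if_pos h, if_pos h, mul_one]
            · rw [if_neg h, if_neg h, mul_zero]
        _ = z s := Fintype.sum_ite_eq s z
    have key2 : ∀ s, (∑ r : Σ i : ι, S i × S i, y r * v (Sum.inl r) s)
        = -∑ i, (if 0 < marg ρ i (s i) then
            ∑ ti, y ⟨i, (s i, ti)⟩ * (u i (Function.update s i ti) - u i s) else 0) := by
      intro s
      rw [← Finset.univ_sigma_univ, Finset.sum_sigma, ← Finset.sum_neg_distrib]
      refine Finset.sum_congr rfl fun i _ => ?_
      rw [Fintype.sum_prod_type, Finset.sum_comm]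
      have hcol : ∀ ti, ∑ si, y ⟨i, (si, ti)⟩ * v (Sum.inl ⟨i, (si, ti)⟩) s
          = if 0 < marg ρ i (s i) then
              y ⟨i, (s i, ti)⟩ * (u i s - u i (Function.update s i ti)) else 0 := by
        intro ti
        calc ∑ si, y ⟨i, (si, ti)⟩ * v (Sum.inl ⟨i, (si, ti)⟩) s
            = ∑ si, if s i = si then (if 0 < marg ρ i si then
                y ⟨i, (si, ti)⟩ * (u i s - u i (Function.update s i ti)) else 0) else 0 := by
              refine Finset.sum_congr rfl fun si _ => ?_
              simp only [hv, Sum.elim_inl]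
              by_cases h : s i = si
              · rw [if_pos h, if_pos h]
                by_cases h2 : 0 < marg ρ i si
                · rw [if_pos h2, if_pos h2]
                · rw [if_neg h2, if_neg h2, mul_zero]
              · rw [if_neg h, if_neg h, mul_zero]
          _ = if 0 < marg ρ i (s i) then
                y ⟨i, (s i, ti)⟩ * (u i s - u i (Function.update s i ti)) else 0 :=
              Fintype.sum_ite_eq (s i) _
      rw [Finset.sum_congr rfl fun ti _ => hcol ti]
      by_cases hm : 0 < marg ρ i (s i)
      · simp only [if_pos hm]
        rw [← Finset.sum_neg_distrib]
        exact Finset.sum_congr rfl fun ti _ => by ring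
      · simp only [if_neg hm]
        simp
    obtain ⟨α, lam, hlam, hα1, hαres, hαD⟩ := dual_from_weights u ρ y (fun r => hc _)
    have hG0 : ∀ s, 0 ≤ ∑ i, (if 0 < marg ρ i (s i) then
        ∑ ti, y ⟨i, (s i, ti)⟩ * (u i (Function.update s i ti) - u i s) else 0) := by
      intro s
      have h1 := hb' s
      rw [key2 s] at h1
      have hzs : 0 ≤ z s := hc _
      have hbs : b s ≤ 0 := by rw [hb]; dsimp only; split <;> norm_num
      linarith
    have hGsb : 1 ≤ ∑ i, (if 0 < marg ρ i (sb i) then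
        ∑ ti, y ⟨i, (sb i, ti)⟩ * (u i (Function.update sb i ti) - u i sb) else 0) := by
      have h1 := hb' sb
      rw [key2 sb] at h1
      have hzs : 0 ≤ z sb := hc _
      have hbs : b sb = -1 := by rw [hb]; dsimp only; rw [if_pos rfl]
      linarith
    have hdv : IsDualVector u α :=
      ⟨hα1, fun s => by rw [hαD s]; exact mul_nonneg hlam.le (hG0 s)⟩
    have h0 := hdual α hdv hαres sb
    rw [hαD sb] at h0
    nlinarith [hGsb, hlam]
  · refine ⟨fun s => -w s, ?_, ?_, ?_⟩
    · intro s
      have h1 := hw (Sum.inr s)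
      have h2 : pdot (v (Sum.inr s)) w = w s := by
        rw [pdot]
        calc ∑ t : ∀ j, S j, v (Sum.inr s) t * w t
            = ∑ t : ∀ j, S j, if t = s then w t else 0 := by
              refine Finset.sum_congr rfl fun t _ => ?_
              simp only [hv, Sum.elim_inr]
              by_cases h : t = s
              · rw [if_pos h, if_pos h, one_mul]
              · rw [if_neg h, if_neg h, zero_mul]
          _ = w s := Fintype.sum_ite_eq' s w
      rw [h2] at h1
      show (0:ℝ) ≤ -w s
      linarith
    · have h1 := hbw
      have h2 : pdot b w = -w sb := by
        rw [pdot]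
        calc ∑ s : ∀ j, S j, b s * w s
            = ∑ s : ∀ j, S j, if s = sb then -w s else 0 := by
              refine Finset.sum_congr rfl fun s _ => ?_
              simp only [hb]
              by_cases h : s = sb
              · rw [if_pos h, if_pos h]; ring
              · rw [if_neg h, if_neg h, zero_mul]
          _ = -w sb := Fintype.sum_ite_eq' sb _
      rw [h2] at h1
      show (0:ℝ) < -w sb
      linarith
    · intro i si hm ti
      have h1 := hw (Sum.inl ⟨i, (si, ti)⟩)
      have h2 : devGain u (fun s => -w s) i si ti = -pdot (v (Sum.inl ⟨i, (si, ti)⟩)) w := by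
        rw [devGain, pdot, ← Finset.sum_neg_distrib]
        refine Finset.sum_congr rfl fun s _ => ?_
        simp only [hv, Sum.elim_inl]
        by_cases h : s i = si
        · rw [if_pos h, if_pos h, if_pos hm]; ring
        · rw [if_neg h, if_neg h]; ring
      rw [h2]
      linarith

end Helpers

/-- Dual characterization: a correlated equilibrium is correlated perfect iff every
`S^ρ`-restricted dual vector has zero aggregate gain at every profile. -/
theorem cpe_iff_dual {S : ι → Type*} [∀ i, Fintype (S i)] [∀ i, DecidableEq (S i)] (u : ∀ _ : ι, (∀ j, S j) → ℝ)
    (ρ : (∀ i, S i) → ℝ) (hce : IsCE u ρ) :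
    IsCPE u ρ ↔
      ∀ α : ∀ i, S i → S i → ℝ, IsDualVector u α → RestrictedTo ρ α →
        ∀ s : ∀ j, S j, ∑ i, Dgain u i s (α i) = 0 := by
  constructor
  · exact cpe_forward u ρ
  · intro hdual
    refine ⟨hce.1, ?_⟩
    have hne : Nonempty (∀ j, S j) := by
      by_contra h
      rw [not_nonempty_iff] at h
      have h1 := hce.1.2
      rw [Finset.univ_eq_empty, Finset.sum_empty] at h1
      norm_num at h1
    -- build a completely mixed strategy with nonnegative on-support deviation gains
    obtain ⟨σ, hσ⟩ : ∃ σ : (∀ j, S j) → ((∀ j, S j) → ℝ),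
        ∀ sb, (∀ s, 0 ≤ σ sb s) ∧ 0 < σ sb sb ∧
          ∀ i si, 0 < marg ρ i si → ∀ ti : S i, 0 ≤ devGain u (σ sb) i si ti := by
      choose σ h1 h2 h3 using fun sb => exists_good_sigma u ρ hdual sb
      exact ⟨σ, fun sb => ⟨h1 sb, h2 sb, h3 sb⟩⟩
    set τ : (∀ j, S j) → ℝ := fun s => ∑ t, σ t s with hτ
    have hτpos : ∀ s, 0 < τ s :=
      fun s => Finset.sum_pos' (fun t _ => (hσ t).1 s)
        ⟨s, Finset.mem_univ s, (hσ s).2.1⟩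
    have hτdev : ∀ i si, 0 < marg ρ i si → ∀ ti : S i, 0 ≤ devGain u τ i si ti := by
      intro i si hm ti
      rw [hτ, devGain_fsum]
      exact Finset.sum_nonneg fun t _ => (hσ t).2.2 i si hm ti
    set T : ℝ := ∑ s, τ s with hT
    have hTpos : 0 < T := Finset.sum_pos (fun s _ => hτpos s) Finset.univ_nonempty
    set σ' : (∀ j, S j) → ℝ := fun s => T⁻¹ * τ s with hσ'
    have hσ'pos : ∀ s, 0 < σ' s := fun s => mul_pos (inv_pos.mpr hTpos) (hτpos s)
    have hσ'sum : ∑ s, σ' s = 1 := by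
      rw [hσ']
      rw [← Finset.mul_sum, ← hT, inv_mul_cancel₀ (ne_of_gt hTpos)]
    have hσ'dev : ∀ i si, 0 < marg ρ i si → ∀ ti : S i, 0 ≤ devGain u σ' i si ti := by
      intro i si hm ti
      rw [hσ', devGain_smul]
      exact mul_nonneg (inv_pos.mpr hTpos).le (hτdev i si hm ti)
    -- the approximating sequence
    refine ⟨fun k s => (1 - (1:ℝ)/(k+1)) * ρ s + ((1:ℝ)/(k+1)) * σ' s, ?_, ?_, ?_⟩
    · intro k
      have hε1 : (0:ℝ) < 1/(k+1) := by positivity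
      have hε2 : (1:ℝ)/(k+1) ≤ 1 := by
        rw [div_le_one (by positivity)]
        have : (0:ℝ) ≤ (k:ℝ) := Nat.cast_nonneg k
        linarith
      refine ⟨⟨fun s => add_nonneg (mul_nonneg (by linarith) (hce.1.1 s))
        (mul_nonneg hε1.le (hσ'pos s).le), ?_⟩, fun s =>
        add_pos_of_nonneg_of_pos (mul_nonneg (by linarith) (hce.1.1 s))
          (mul_pos hε1 (hσ'pos s))⟩
      rw [Finset.sum_add_distrib, ← Finset.mul_sum, ← Finset.mul_sum, hce.1.2, hσ'sum]
      ring
    · intro s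
      have hεlim : Tendsto (fun k : ℕ => (1:ℝ)/(k+1)) atTop (𝓝 0) :=
        tendsto_one_div_add_atTop_nhds_zero_nat
      have h1 : Tendsto (fun k : ℕ => ρ s + (1:ℝ)/(k+1) * (σ' s - ρ s)) atTop (𝓝 (ρ s)) := by
        have h2 : Tendsto (fun k : ℕ => (1:ℝ)/(k+1) * (σ' s - ρ s)) atTop (𝓝 0) := by
          simpa using hεlim.mul_const (σ' s - ρ s)
        simpa using (tendsto_const_nhds (x := ρ s)).add h2
      refine h1.congr fun k => by ring
    · intro k i si hm ti
      rw [devGain_affine]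
      have hε1 : (0:ℝ) < 1/(k+1) := by positivity
      have hε2 : (1:ℝ)/(k+1) ≤ 1 := by
        rw [div_le_one (by positivity)]
        have : (0:ℝ) ≤ (k:ℝ) := Nat.cast_nonneg k
        linarith
      exact add_nonneg (mul_nonneg (by linarith) (hce.2 i si ti))
        (mul_nonneg hε1.le (hσ'dev i si hm ti))
end

section
/- Monotonicity of correlated perfection in support: if ρ and ρ' are correlated equilibria with S^ρ ⊆ S^{ρ'} (componentwise product-set inclusion) and ρ' is correlated perfect, then ρ is correlated perfect. -/
open Finset Filter Topology

variable {ι : Type*} [Fintype ι] [DecidableEq ι]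

lemma devGain_combo {S : ι → Type*} [∀ i, Fintype (S i)] [∀ i, DecidableEq (S i)]
    (u : ∀ _ : ι, (∀ j, S j) → ℝ) (ρ σ : (∀ i, S i) → ℝ) (a b : ℝ) (i : ι) (si si' : S i) :
    devGain u (fun s => a * ρ s + b * σ s) i si si'
      = a * devGain u ρ i si si' + b * devGain u σ i si si' := by
  simp only [devGain, Finset.mul_sum, ← Finset.sum_add_distrib]
  refine Finset.sum_congr rfl fun s _ => ?_
  split <;> ring

/-- Monotonicity in support: if `S^ρ ⊆ S^{ρ'}` and `ρ'` is correlated perfect, so is `ρ`. -/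
theorem cpe_of_support_subset {S : ι → Type*} [∀ i, Fintype (S i)] [∀ i, DecidableEq (S i)] (u : ∀ _ : ι, (∀ j, S j) → ℝ)
    (ρ ρ' : (∀ i, S i) → ℝ) (hce : IsCE u ρ) (hce' : IsCE u ρ')
    (hsupp : ∀ i (si : S i), 0 < marg ρ i si → 0 < marg ρ' i si)
    (h : IsCPE u ρ') : IsCPE u ρ := by
  obtain ⟨_, ρk, hmix, _, hgain⟩ := h
  refine ⟨hce.1, fun k s => (1 - 1/(k+1)) * ρ s + (1/(k+1)) * ρk k s, ?_, ?_, ?_⟩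
  · intro k
    have hε : (0:ℝ) < 1/(k+1) := by positivity
    have hε1 : (1:ℝ)/(k+1) ≤ 1 := by
      rw [div_le_one (by positivity)]; linarith [Nat.cast_nonneg (α := ℝ) k]
    refine ⟨⟨fun s => ?_, ?_⟩, fun s => ?_⟩
    · have := hce.1.1 s
      have := (hmix k).1.1 s
      nlinarith
    · rw [Finset.sum_add_distrib, ← Finset.mul_sum, ← Finset.mul_sum,
        hce.1.2, (hmix k).1.2]; ring
    · have h1 := hce.1.1 s
      have h2 := (hmix k).2 s
      nlinarith
  · intro s
    have key : Tendsto (fun k : ℕ => (1/(k+1:ℝ)) * (ρk k s - ρ s)) atTop (𝓝 0) := by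
      apply squeeze_zero_norm (a := fun k : ℕ => (1/(k+1:ℝ)) * (1 + |ρ s|))
      · intro k
        have hε : (0:ℝ) < 1/(k+1) := by positivity
        rw [norm_mul, Real.norm_eq_abs, Real.norm_eq_abs, abs_of_pos hε]
        gcongr
        have h1 : ρk k s ≤ 1 := by
          have := (hmix k).1.2
          calc ρk k s ≤ ∑ t, ρk k t :=
                Finset.single_le_sum (fun t _ => (hmix k).1.1 t) (Finset.mem_univ s)
            _ = 1 := this
        have h2 := (hmix k).1.1 s
        calc |ρk k s - ρ s| ≤ |ρk k s| + |ρ s| := abs_sub _ _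
          _ ≤ 1 + |ρ s| := by rw [abs_of_nonneg h2]; linarith
      · have : Tendsto (fun k : ℕ => (1/(k+1:ℝ))) atTop (𝓝 0) :=
          tendsto_one_div_add_atTop_nhds_zero_nat
        simpa using this.mul_const (1 + |ρ s|)
    have : Tendsto (fun k : ℕ => ρ s + (1/(k+1:ℝ)) * (ρk k s - ρ s)) atTop (𝓝 (ρ s + 0)) :=
      tendsto_const_nhds.add key
    simpa [add_zero] using this.congr (fun k => by ring)
  · intro k i si hsi si'
    rw [devGain_combo]
    have hε : (0:ℝ) < 1/(k+1) := by positivity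
    have hε1 : (1:ℝ)/(k+1) ≤ 1 := by
      rw [div_le_one (by positivity)]; linarith [Nat.cast_nonneg (α := ℝ) k]
    have g1 := hce.2 i si si'
    have g2 := hgain k i si (hsupp i si hsi) si'
    nlinarith
end

section
/- The set of correlated perfect equilibria of a finite normal-form game is a finite union of convex sets (one for each product support set on which correlated perfection holds), and in particular is closed. -/
open Finset Filter Topology

variable {ι : Type*} [Fintype ι] [DecidableEq ι]

open Finset Filter Topology

section Aux

variable {ι : Type*} [Fintype ι] [DecidableEq ι]
variable {S : ι → Type*} [∀ i, Fintype (S i)] [∀ i, DecidableEq (S i)]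

lemma marg_lin' (ρ ρ' : (∀ i, S i) → ℝ) (a b : ℝ) (i : ι) (si : S i) :
    marg (a • ρ + b • ρ') i si = a * marg ρ i si + b * marg ρ' i si := by
  simp only [marg, Finset.mul_sum, ← Finset.sum_add_distrib, Pi.add_apply, Pi.smul_apply,
    smul_eq_mul]
  exact Finset.sum_congr rfl fun s _ => by split_ifs <;> ring

lemma devGain_lin' (u : ∀ _ : ι, (∀ j, S j) → ℝ) (ρ ρ' : (∀ i, S i) → ℝ) (a b : ℝ)
    (i : ι) (si si' : S i) :
    devGain u (a • ρ + b • ρ') i si si' =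
      a * devGain u ρ i si si' + b * devGain u ρ' i si si' := by
  simp only [devGain, Finset.mul_sum, ← Finset.sum_add_distrib, Pi.add_apply, Pi.smul_apply,
    smul_eq_mul]
  exact Finset.sum_congr rfl fun s _ => by split_ifs <;> ring

lemma continuous_marg' (i : ι) (si : S i) :
    Continuous fun ρ : (∀ i, S i) → ℝ => marg ρ i si := by
  unfold marg
  refine continuous_finset_sum _ fun s _ => ?_
  by_cases h : s i = si <;> simp only [h, if_true, if_false]
  · exact continuous_apply s
  · exact continuous_const

/-- Completely mixed distributions whose deviation gains are nonneg on `T`. -/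
def ET (u : ∀ _ : ι, (∀ j, S j) → ℝ) (T : Finset (Σ i, S i)) : Set ((∀ i, S i) → ℝ) :=
  {σ | IsDist σ ∧ CompletelyMixed σ ∧ ∀ p ∈ T, ∀ si', 0 ≤ devGain u σ p.1 p.2 si'}

/-- Candidate convex closed piece for support set `T`. -/
def CT (u : ∀ _ : ι, (∀ j, S j) → ℝ) (T : Finset (Σ i, S i)) : Set ((∀ i, S i) → ℝ) :=
  closure (ET u T) ∩ {ρ | ∀ p : Σ i, S i, p ∉ T → marg ρ p.1 p.2 ≤ 0}

lemma ET_convex (u : ∀ _ : ι, (∀ j, S j) → ℝ) (T : Finset (Σ i, S i)) :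
    Convex ℝ (ET u T) := by
  rintro ρ ⟨⟨hρ0, hρ1⟩, hρm, hρd⟩ ρ' ⟨⟨hρ'0, hρ'1⟩, hρ'm, hρ'd⟩ a b ha hb hab
  refine ⟨⟨fun s => ?_, ?_⟩, fun s => ?_, fun p hp si' => ?_⟩
  · simp only [Pi.add_apply, Pi.smul_apply, smul_eq_mul]
    have := mul_nonneg ha (hρ0 s); have := mul_nonneg hb (hρ'0 s); linarith
  · simp only [Pi.add_apply, Pi.smul_apply, smul_eq_mul, Finset.sum_add_distrib,
      ← Finset.mul_sum, hρ1, hρ'1]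
    linarith
  · simp only [Pi.add_apply, Pi.smul_apply, smul_eq_mul]
    rcases ha.lt_or_eq with h | h
    · have := mul_pos h (hρm s); have := mul_nonneg hb (hρ'm s).le; linarith
    · have hb1 : b = 1 := by linarith
      simpa [← h, hb1] using hρ'm s
  · rw [devGain_lin']
    have := mul_nonneg ha (hρd p hp si'); have := mul_nonneg hb (hρ'd p hp si'); linarith

lemma CT_convex (u : ∀ _ : ι, (∀ j, S j) → ℝ) (T : Finset (Σ i, S i)) :
    Convex ℝ (CT u T) := by
  refine (ET_convex u T).closure.inter ?_
  rintro ρ hρ ρ' hρ' a b ha hb hab p hp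
  rw [marg_lin']
  have := mul_nonpos_of_nonneg_of_nonpos ha (hρ p hp)
  have := mul_nonpos_of_nonneg_of_nonpos hb (hρ' p hp)
  linarith

lemma CT_closed (u : ∀ _ : ι, (∀ j, S j) → ℝ) (T : Finset (Σ i, S i)) :
    IsClosed (CT u T) := by
  refine isClosed_closure.inter ?_
  have : {ρ : (∀ i, S i) → ℝ | ∀ p : Σ i, S i, p ∉ T → marg ρ p.1 p.2 ≤ 0} =
      ⋂ (p : Σ i, S i), ⋂ (_ : p ∉ T), {ρ | marg ρ p.1 p.2 ≤ 0} := by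
    ext ρ; simp [Set.mem_iInter]
  rw [this]
  exact isClosed_iInter fun p => isClosed_iInter fun _ =>
    isClosed_le (continuous_marg' p.1 p.2) continuous_const

lemma cpe_eq_union (u : ∀ _ : ι, (∀ j, S j) → ℝ) :
    {ρ : (∀ i, S i) → ℝ | IsCPE u ρ} = ⋃ T : Finset (Σ i, S i), CT u T := by
  classical
  ext ρ
  simp only [Set.mem_setOf_eq, Set.mem_iUnion]
  constructor
  · rintro ⟨hd, ρk, hk, hconv, hbest⟩
    refine ⟨Finset.univ.filter (fun p : Σ i, S i => 0 < marg ρ p.1 p.2), ?_, ?_⟩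
    · refine mem_closure_of_tendsto (tendsto_pi_nhds.mpr hconv)
        (Filter.Eventually.of_forall fun k => ⟨(hk k).1, (hk k).2, fun p hp si' => ?_⟩)
      exact hbest k p.1 p.2 (Finset.mem_filter.mp hp).2 si'
    · intro p hp
      exact not_lt.mp fun h => hp (Finset.mem_filter.mpr ⟨Finset.mem_univ _, h⟩)
  · rintro ⟨T, hcl, hmarg⟩
    obtain ⟨σ, hσmem, hσtend⟩ := mem_closure_iff_seq_limit.mp hcl
    have hpt : ∀ s, Tendsto (fun k => σ k s) atTop (𝓝 (ρ s)) := tendsto_pi_nhds.mp hσtend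
    have hdist : IsDist ρ := by
      refine ⟨fun s => ge_of_tendsto' (hpt s) fun k => (hσmem k).1.1 s, ?_⟩
      have h1 : Tendsto (fun k => ∑ s, σ k s) atTop (𝓝 (∑ s, ρ s)) :=
        tendsto_finset_sum _ fun s _ => hpt s
      have h2 : Tendsto (fun k => ∑ s, σ k s) atTop (𝓝 (1 : ℝ)) := by
        simpa [fun k => (hσmem k).1.2] using (tendsto_const_nhds : Tendsto (fun _ : ℕ => (1:ℝ)) atTop _)
      exact tendsto_nhds_unique h1 h2
    refine ⟨hdist, σ, fun k => ⟨(hσmem k).1, (hσmem k).2.1⟩, hpt, fun k i si hm si' => ?_⟩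
    have hp : (⟨i, si⟩ : Σ i, S i) ∈ T := by
      by_contra h
      exact absurd (hmarg ⟨i, si⟩ h) (not_le.mpr hm)
    exact (hσmem k).2.2 ⟨i, si⟩ hp si'

end Aux


/-- The set of correlated perfect equilibria is a finite union of convex sets,
and in particular is closed. -/
theorem cpe_finite_union_convex {S : ι → Type*} [∀ i, Fintype (S i)] [∀ i, DecidableEq (S i)] (u : ∀ _ : ι, (∀ j, S j) → ℝ) :
    (∃ (n : ℕ) (C : Fin n → Set ((∀ i, S i) → ℝ)),
      (∀ k, Convex ℝ (C k)) ∧ {ρ : (∀ i, S i) → ℝ | IsCPE u ρ} = ⋃ k : Fin n, C k) ∧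
    IsClosed {ρ : (∀ i, S i) → ℝ | IsCPE u ρ} := by
  classical
  set n := Fintype.card (Finset (Σ i, S i)) with hn
  let e : Fin n ≃ Finset (Σ i, S i) := (Fintype.equivFin (Finset (Σ i, S i))).symm
  have hunion : {ρ : (∀ i, S i) → ℝ | IsCPE u ρ} = ⋃ k : Fin n, CT u (e k) := by
    rw [cpe_eq_union u]
    exact (e.surjective.iUnion_comp fun T => CT u T).symm
  refine ⟨⟨n, fun k => CT u (e k), fun k => CT_convex u (e k), hunion⟩, ?_⟩
  rw [hunion]
  exact isClosed_iUnion_of_finite fun k => CT_closed u (e k)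
end

section
/- In Myerson's three-person game, the degenerate distribution placing probability one on (y_1, y_2, y_3) is a correlated perfect equilibrium. -/
open Finset Filter Topology

/-- Strategy profiles: player 1 and 2 choose in `Fin 3` (0 = x, 1 = y, 2 = z),
player 3 chooses in `Fin 2` (0 = x₃, 1 = y₃). -/
abbrev Prof : Type := Fin 3 × Fin 3 × Fin 2

/-- Player 1's payoff in Myerson's three-person game. -/
noncomputable def u1 : Prof → ℝ :=
  fun p => if p.2.2 = 1 then 3 else !![1, 2, 2; 0, 3, 0; 0, 0, 3] p.1 p.2.1

/-- Player 2's payoff. -/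
noncomputable def u2 : Prof → ℝ :=
  fun p => if p.2.2 = 1 then 3 else !![1, 0, 0; 2, 0, 3; 2, 3, 0] p.1 p.2.1

/-- Player 3's payoff. -/
noncomputable def u3 : Prof → ℝ :=
  fun p => if p.2.2 = 1 then 1 else if p.1 = 0 ∧ p.2.1 = 0 then 2 else 0

def IsDist3 (ρ : Prof → ℝ) : Prop := (∀ p, 0 ≤ ρ p) ∧ ∑ p, ρ p = 1

def Mixed3 (ρ : Prof → ℝ) : Prop := ∀ p, 0 < ρ p

def marg1 (ρ : Prof → ℝ) (a : Fin 3) : ℝ := ∑ b : Fin 3, ∑ c : Fin 2, ρ (a, b, c)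
def marg2 (ρ : Prof → ℝ) (b : Fin 3) : ℝ := ∑ a : Fin 3, ∑ c : Fin 2, ρ (a, b, c)
def marg3 (ρ : Prof → ℝ) (c : Fin 2) : ℝ := ∑ a : Fin 3, ∑ b : Fin 3, ρ (a, b, c)

/-- Correlated perfect equilibrium of Myerson's game: a completely mixed sequence
converging to `ρ` along which every recommendation in the support stays optimal. -/
def IsCPE3 (ρ : Prof → ℝ) : Prop :=
  IsDist3 ρ ∧ ∃ ρk : ℕ → Prof → ℝ,
    (∀ k, IsDist3 (ρk k) ∧ Mixed3 (ρk k)) ∧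
    (∀ p, Tendsto (fun k => ρk k p) atTop (𝓝 (ρ p))) ∧
    (∀ k a, 0 < marg1 ρ a → ∀ a',
      ∑ b : Fin 3, ∑ c : Fin 2, ρk k (a, b, c) * u1 (a', b, c) ≤
        ∑ b : Fin 3, ∑ c : Fin 2, ρk k (a, b, c) * u1 (a, b, c)) ∧
    (∀ k b, 0 < marg2 ρ b → ∀ b',
      ∑ a : Fin 3, ∑ c : Fin 2, ρk k (a, b, c) * u2 (a, b', c) ≤
        ∑ a : Fin 3, ∑ c : Fin 2, ρk k (a, b, c) * u2 (a, b, c)) ∧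
    (∀ k c, 0 < marg3 ρ c → ∀ c',
      ∑ a : Fin 3, ∑ b : Fin 3, ρk k (a, b, c) * u3 (a, b, c') ≤
        ∑ a : Fin 3, ∑ b : Fin 3, ρk k (a, b, c) * u3 (a, b, c))

/-!
Perturb the point mass on `(y₁, y₂, y₃)` by the weights `1` on `(y₁, y₂, y₃)`, `3ε` on
`(y₁, y₂, x₃)`, `7ε` on `(z₁, y₂, x₃)` and `ε` elsewhere. Under `y₃` every payoff is constant,
so only the `x₃`-profiles matter: given `y₁`, player 1 earns `9ε` from both `x₁` and `y₁` (and
`3ε` from `z₁`); given `y₂`, player 2 earns `21ε` from both `x₂` and `y₂` (and `9ε` from `z₂`);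
given `y₃`, player 3 earns `1 + 8ε` against `2ε` from `x₃`. The obedience constraints are
homogeneous in the distribution, so these unnormalized weights can be normalized at the end.
-/

/-- Player 1's expected payoff from playing `a'` when recommended `a`, up to the factor
`marg1 σ a`; `σ` need not be normalized. -/
noncomputable def condPayoff1 (σ : Prof → ℝ) (a a' : Fin 3) : ℝ :=
  ∑ b : Fin 3, ∑ c : Fin 2, σ (a, b, c) * u1 (a', b, c)

noncomputable def condPayoff2 (σ : Prof → ℝ) (b b' : Fin 3) : ℝ :=
  ∑ a : Fin 3, ∑ c : Fin 2, σ (a, b, c) * u2 (a, b', c)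

noncomputable def condPayoff3 (σ : Prof → ℝ) (c c' : Fin 2) : ℝ :=
  ∑ a : Fin 3, ∑ b : Fin 3, σ (a, b, c) * u3 (a, b, c')

def Obedient1 (σ : Prof → ℝ) (a a' : Fin 3) : Prop := condPayoff1 σ a a' ≤ condPayoff1 σ a a

def Obedient2 (σ : Prof → ℝ) (b b' : Fin 3) : Prop := condPayoff2 σ b b' ≤ condPayoff2 σ b b

def Obedient3 (σ : Prof → ℝ) (c c' : Fin 2) : Prop := condPayoff3 σ c c' ≤ condPayoff3 σ c c

section Scaling

variable {σ : Prof → ℝ} {t : ℝ}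

theorem condPayoff1_const_mul (a a' : Fin 3) :
    condPayoff1 (fun p => t * σ p) a a' = t * condPayoff1 σ a a' := by
  simp only [condPayoff1, mul_assoc, Finset.mul_sum]

theorem condPayoff2_const_mul (b b' : Fin 3) :
    condPayoff2 (fun p => t * σ p) b b' = t * condPayoff2 σ b b' := by
  simp only [condPayoff2, mul_assoc, Finset.mul_sum]

theorem condPayoff3_const_mul (c c' : Fin 2) :
    condPayoff3 (fun p => t * σ p) c c' = t * condPayoff3 σ c c' := by
  simp only [condPayoff3, mul_assoc, Finset.mul_sum]

theorem Obedient1.const_mul {a a' : Fin 3} (h : Obedient1 σ a a') (ht : 0 ≤ t) :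
    Obedient1 (fun p => t * σ p) a a' := by
  unfold Obedient1
  rw [condPayoff1_const_mul, condPayoff1_const_mul]
  exact mul_le_mul_of_nonneg_left h ht

theorem Obedient2.const_mul {b b' : Fin 3} (h : Obedient2 σ b b') (ht : 0 ≤ t) :
    Obedient2 (fun p => t * σ p) b b' := by
  unfold Obedient2
  rw [condPayoff2_const_mul, condPayoff2_const_mul]
  exact mul_le_mul_of_nonneg_left h ht

theorem Obedient3.const_mul {c c' : Fin 2} (h : Obedient3 σ c c') (ht : 0 ≤ t) :
    Obedient3 (fun p => t * σ p) c c' := by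
  unfold Obedient3
  rw [condPayoff3_const_mul, condPayoff3_const_mul]
  exact mul_le_mul_of_nonneg_left h ht

end Scaling

theorem isCPE3_of_weights {ρ : Prof → ℝ} (hρ : IsDist3 ρ) (w : ℕ → Prof → ℝ)
    (hpos : ∀ k p, 0 < w k p) (hlim : ∀ p, Tendsto (fun k => w k p) atTop (𝓝 (ρ p)))
    (h₁ : ∀ k a, 0 < marg1 ρ a → ∀ a', Obedient1 (w k) a a')
    (h₂ : ∀ k b, 0 < marg2 ρ b → ∀ b', Obedient2 (w k) b b')
    (h₃ : ∀ k c, 0 < marg3 ρ c → ∀ c', Obedient3 (w k) c c') :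
    IsCPE3 ρ := by
  set S : ℕ → ℝ := fun k => ∑ q, w k q
  have hS : ∀ k, 0 < S k := fun k => Finset.sum_pos (fun q _ => hpos k q) univ_nonempty
  have hSinv : ∀ k, 0 ≤ (S k)⁻¹ := fun k => inv_nonneg.2 (hS k).le
  have hSlim : Tendsto S atTop (𝓝 1) := hρ.2 ▸ tendsto_finsetSum _ fun q _ => hlim q
  refine ⟨hρ, fun k p => (S k)⁻¹ * w k p, fun k => ⟨⟨fun p => ?_, ?_⟩, fun p => ?_⟩,
    fun p => ?_, fun k a ha a' => (h₁ k a ha a').const_mul (hSinv k),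
    fun k b hb b' => (h₂ k b hb b').const_mul (hSinv k),
    fun k c hc c' => (h₃ k c hc c').const_mul (hSinv k)⟩
  · exact mul_nonneg (hSinv k) (hpos k p).le
  · rw [← Finset.mul_sum, inv_mul_cancel₀ (hS k).ne']
  · exact mul_pos (inv_pos.2 (hS k)) (hpos k p)
  · simpa using (hSlim.inv₀ one_ne_zero).mul (hlim p)

def pointMass (q : Prof) : Prof → ℝ := fun p => if p = q then 1 else 0

theorem isDist3_pointMass (q : Prof) : IsDist3 (pointMass q) :=
  ⟨fun p => by unfold pointMass; split_ifs <;> norm_num, by simp [pointMass]⟩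

theorem eq_of_marg1_pointMass_pos {q : Prof} {a : Fin 3} (h : 0 < marg1 (pointMass q) a) :
    a = q.1 := by
  by_contra hne
  refine h.ne' (Finset.sum_eq_zero fun b _ => Finset.sum_eq_zero fun c _ => if_neg ?_)
  rintro rfl
  exact hne rfl

theorem eq_of_marg2_pointMass_pos {q : Prof} {b : Fin 3} (h : 0 < marg2 (pointMass q) b) :
    b = q.2.1 := by
  by_contra hne
  refine h.ne' (Finset.sum_eq_zero fun a _ => Finset.sum_eq_zero fun c _ => if_neg ?_)
  rintro rfl
  exact hne rfl

theorem eq_of_marg3_pointMass_pos {q : Prof} {c : Fin 2} (h : 0 < marg3 (pointMass q) c) :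
    c = q.2.2 := by
  by_contra hne
  refine h.ne' (Finset.sum_eq_zero fun a _ => Finset.sum_eq_zero fun b _ => if_neg ?_)
  rintro rfl
  exact hne rfl

noncomputable def perturbation (ε : ℝ) (p : Prof) : ℝ :=
  if p = (1, 1, 1) then 1 else if p = (1, 1, 0) then 3 * ε
  else if p = (2, 1, 0) then 7 * ε else ε

theorem perturbation_pos {ε : ℝ} (hε : 0 < ε) (p : Prof) : 0 < perturbation ε p := by
  unfold perturbation; split_ifs <;> positivity

theorem perturbation_zero : perturbation 0 = pointMass (1, 1, 1) := by
  funext p; unfold perturbation pointMass; split_ifs <;> simp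

theorem continuous_perturbation (p : Prof) : Continuous fun ε => perturbation ε p := by
  unfold perturbation; split_ifs <;> fun_prop

theorem condPayoff1_perturbation (ε : ℝ) (a' : Fin 3) :
    condPayoff1 (perturbation ε) 1 a' = 3 + 6 * ε + ![9, 9, 3] a' * ε := by
  fin_cases a' <;> simp [condPayoff1, perturbation, u1, Fin.sum_univ_three, Fin.sum_univ_two] <;>
    ring

theorem condPayoff2_perturbation (ε : ℝ) (b' : Fin 3) :
    condPayoff2 (perturbation ε) 1 b' = 3 + 6 * ε + ![21, 21, 9] b' * ε := by
  fin_cases b' <;> simp [condPayoff2, perturbation, u2, Fin.sum_univ_three, Fin.sum_univ_two] <;>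
    ring

theorem condPayoff3_perturbation (ε : ℝ) (c' : Fin 2) :
    condPayoff3 (perturbation ε) 1 c' = ![2 * ε, 1 + 8 * ε] c' := by
  fin_cases c' <;> simp [condPayoff3, perturbation, u3, Fin.sum_univ_three] <;> ring

theorem obedient1_perturbation {ε : ℝ} (hε : 0 ≤ ε) (a' : Fin 3) :
    Obedient1 (perturbation ε) 1 a' := by
  unfold Obedient1
  rw [condPayoff1_perturbation, condPayoff1_perturbation]
  fin_cases a' <;> simp
  linarith

theorem obedient2_perturbation {ε : ℝ} (hε : 0 ≤ ε) (b' : Fin 3) :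
    Obedient2 (perturbation ε) 1 b' := by
  unfold Obedient2
  rw [condPayoff2_perturbation, condPayoff2_perturbation]
  fin_cases b' <;> simp
  linarith

theorem obedient3_perturbation {ε : ℝ} (hε : 0 ≤ ε) (c' : Fin 2) :
    Obedient3 (perturbation ε) 1 c' := by
  unfold Obedient3
  rw [condPayoff3_perturbation, condPayoff3_perturbation]
  fin_cases c' <;> simp
  linarith

/-- The degenerate distribution on `(y₁, y₂, y₃)` is a correlated perfect equilibrium of
Myerson's three-person game. -/
theorem myerson_delta_yyy_isCPE :
    IsCPE3 (fun p => if p = (1, 1, 1) then 1 else 0) := by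
  show IsCPE3 (pointMass (1, 1, 1))
  set ε : ℕ → ℝ := fun k => ((k : ℝ) + 1)⁻¹
  have hε : ∀ k, 0 < ε k := fun k => by positivity
  have hlim : Tendsto ε atTop (𝓝 0) := by
    simpa [ε] using tendsto_one_div_add_atTop_nhds_zero_nat (𝕜 := ℝ)
  refine isCPE3_of_weights (isDist3_pointMass (1, 1, 1)) (fun k => perturbation (ε k))
    (fun k => perturbation_pos (hε k)) (fun p => ?_) ?_ ?_ ?_
  · rw [← congrFun perturbation_zero p]
    exact ((continuous_perturbation p).tendsto 0).comp hlim
  · rintro k a ha a'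
    obtain rfl := eq_of_marg1_pointMass_pos ha
    exact obedient1_perturbation (hε k).le a'
  · rintro k b hb b'
    obtain rfl := eq_of_marg2_pointMass_pos hb
    exact obedient2_perturbation (hε k).le b'
  · rintro k c hc c'
    obtain rfl := eq_of_marg3_pointMass_pos hc
    exact obedient3_perturbation (hε k).le c'
end

section
/- Duplication invariance: let G' be obtained from a finite game G by adding, for some player i, a duplicate strategy ŝ_i payoff-equivalent to an existing strategy s_i (for all players' payoffs). If ρ is a correlated perfect equilibrium (CPE) of G, then the lifted distribution ρ' on G' with ρ'(s) = ρ(s) for profiles s not involving ŝ_i and ρ'(s) = 0 otherwise is a CPE of G'. -/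
open Finset Filter Topology
set_option linter.unusedSectionVars false
set_option maxHeartbeats 1000000

variable {ι : Type*} [Fintype ι] [DecidableEq ι]

/-- The strategy sets of the duplicated game: player `i0` gets one extra copy
(`Sum.inr _`) of a designated strategy; other players are unchanged (the right summand
is empty for `j ≠ i0`). -/
def Dup (S : ι → Type*) (i0 : ι) (j : ι) : Type _ := S j ⊕ PLift (j = i0)

instance {S : ι → Type*} [∀ i, Fintype (S i)] (i0 j : ι) [Decidable (j = i0)] :
    Fintype (Dup S i0 j) := by
  unfold Dup; infer_instance

instance {S : ι → Type*} [∀ i, DecidableEq (S i)] (i0 j : ι) :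
    DecidableEq (Dup S i0 j) := by
  unfold Dup; infer_instance

/-- Project a profile of the duplicated game to the original game, sending the duplicate
back to the strategy `s0 : S i0` it copies. -/
def projDup {S : ι → Type*} (i0 : ι) (s0 : S i0) (t : ∀ j, Dup S i0 j) (j : ι) : S j :=
  Sum.elim id (fun h => cast (congrArg S h.down.symm) s0) (t j)

/-- The payoffs of the duplicated game: the duplicate is payoff-equivalent to `s0`. -/
def dupPay {S : ι → Type*} (i0 : ι) (s0 : S i0) (u : ∀ _ : ι, (∀ j, S j) → ℝ) :
    ∀ _ : ι, (∀ j, Dup S i0 j) → ℝ :=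
  fun i t => u i (projDup i0 s0 t)

/-- The lift of a correlated strategy `ρ`: zero probability on profiles using the
duplicate, `ρ` on the embedded original profiles. -/
noncomputable def dupLift {S : ι → Type*} [∀ i, Fintype (S i)] (i0 : ι) (s0 : S i0)
    (ρ : (∀ i, S i) → ℝ) : (∀ j, Dup S i0 j) → ℝ :=
  fun t => if ∀ j, (t j).isLeft then ρ (projDup i0 s0 t) else 0

namespace DupAux

variable {S : ι → Type*} [∀ i, Fintype (S i)] [∀ i, DecidableEq (S i)]

def emb {S : ι → Type*} (i0 : ι) (s : ∀ j, S j) : ∀ j, Dup S i0 j := fun j => Sum.inl (s j)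

def hat {S : ι → Type*} (i0 : ι) (s : ∀ j, S j) : ∀ j, Dup S i0 j :=
  Function.update (emb i0 s) i0 (Sum.inr ⟨rfl⟩)

def prj {S : ι → Type*} (i0 : ι) (s0 : S i0) {i : ι} (x : Dup S i0 i) : S i :=
  Sum.elim id (fun h => cast (congrArg S h.down.symm) s0) x

variable {i0 : ι} (s0 : S i0)

@[simp] lemma emb_apply (s : ∀ j, S j) (j : ι) : emb i0 s j = Sum.inl (s j) := rfl

@[simp] lemma hat_self (s : ∀ j, S j) : hat i0 s i0 = Sum.inr ⟨rfl⟩ :=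
  Function.update_self _ _ _

lemma hat_ne (s : ∀ j, S j) {j : ι} (hj : j ≠ i0) : hat i0 s j = Sum.inl (s j) :=
  Function.update_of_ne hj _ _

lemma projDup_apply (t : ∀ j, Dup S i0 j) (j : ι) :
    projDup i0 s0 t j = prj i0 s0 (t j) := rfl

@[simp] lemma prj_inl {i : ι} (a : S i) : prj i0 s0 (Sum.inl a : Dup S i0 i) = a := rfl

@[simp] lemma prj_inr (h : PLift (i0 = i0)) : prj i0 s0 (Sum.inr h : Dup S i0 i0) = s0 := by
  have : h = ⟨rfl⟩ := Subsingleton.elim _ _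
  subst this; rfl

@[simp] lemma projDup_emb (s : ∀ j, S j) : projDup i0 s0 (emb i0 s) = s := rfl

lemma projDup_hat (s : ∀ j, S j) (hs : s i0 = s0) : projDup i0 s0 (hat i0 s) = s := by
  funext j
  by_cases hj : j = i0
  · subst hj; rw [projDup_apply, hat_self, prj_inr, hs]
  · rw [projDup_apply, hat_ne _ hj, prj_inl]

lemma isLeft_of_ne (t : ∀ j, Dup S i0 j) {j : ι} (hj : j ≠ i0) : (t j).isLeft := by
  cases ht : t j with
  | inl a => rfl
  | inr p => exact absurd p.down hj

lemma emb_projDup (t : ∀ j, Dup S i0 j) (h : (t i0).isLeft) :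
    emb i0 (projDup i0 s0 t) = t := by
  funext j
  rw [emb_apply, projDup_apply]
  by_cases hj : j = i0
  · rw [hj]
    cases ht : t i0 with
    | inl a => rfl
    | inr p => rw [ht] at h; simp at h
  · cases ht : t j with
    | inl a => rfl
    | inr p => exact absurd p.down hj

lemma hat_projDup (t : ∀ j, Dup S i0 j) (h : ¬ (t i0).isLeft) :
    hat i0 (projDup i0 s0 t) = t := by
  funext j
  by_cases hj : j = i0
  · rw [hj, hat_self]
    cases ht : t i0 with
    | inl a => rw [ht] at h; simp at h
    | inr p => exact congrArg Sum.inr (Subsingleton.elim _ _)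
  · rw [hat_ne _ hj, projDup_apply]
    cases ht : t j with
    | inl a => rfl
    | inr p => exact absurd p.down hj

lemma projDup_i0_of_not_left (t : ∀ j, Dup S i0 j) (h : ¬ (t i0).isLeft) :
    projDup i0 s0 t i0 = s0 := by
  rw [projDup_apply]
  cases ht : t i0 with
  | inl a => rw [ht] at h; simp at h
  | inr p => exact prj_inr s0 p

lemma projDup_update (t : ∀ j, Dup S i0 j) (i : ι) (si' : Dup S i0 i) :
    projDup i0 s0 (Function.update t i si') =
      Function.update (projDup i0 s0 t) i (prj i0 s0 si') := by
  funext j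
  by_cases hj : j = i
  · subst hj
    rw [projDup_apply, Function.update_self, Function.update_self]
  · rw [projDup_apply, Function.update_of_ne hj, Function.update_of_ne hj, projDup_apply]

lemma sum_dup (F : (∀ j, Dup S i0 j) → ℝ) :
    ∑ t, F t = (∑ s, F (emb i0 s)) + ∑ s, if s i0 = s0 then F (hat i0 s) else 0 := by
  rw [← Finset.sum_filter_add_sum_filter_not Finset.univ (fun t => (t i0).isLeft) F]
  congr 1
  · refine Finset.sum_nbij' (projDup i0 s0) (emb i0) (fun t _ => Finset.mem_univ _)
      (fun s _ => ?_) (fun t ht => ?_) (fun s _ => ?_) (fun t ht => ?_)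
    · simp
    · exact emb_projDup s0 t (by simpa using ht)
    · exact projDup_emb s0 s
    · rw [emb_projDup s0 t (by simpa using ht)]
  · rw [← Finset.sum_filter]
    refine Finset.sum_nbij' (projDup i0 s0) (hat i0) (fun t ht => ?_)
      (fun s hs => ?_) (fun t ht => ?_) (fun s hs => ?_) (fun t ht => ?_)
    · simp only [Finset.mem_filter, Finset.mem_univ, true_and] at ht ⊢
      exact projDup_i0_of_not_left s0 t ht
    · simp only [Finset.mem_filter, Finset.mem_univ, true_and] at hs ⊢
      rw [hat_self]; simp
    · exact hat_projDup s0 t (by simpa using ht)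
    · simp only [Finset.mem_filter, Finset.mem_univ, true_and] at hs
      exact projDup_hat s0 s hs
    · rw [hat_projDup s0 t (by simpa using ht)]

noncomputable def eps (k : ℕ) : ℝ := 1 / (k + 2)

lemma eps_pos (k : ℕ) : 0 < eps k := by rw [eps]; positivity

lemma eps_lt_one (k : ℕ) : eps k < 1 := by
  rw [eps]
  have hk : (0:ℝ) ≤ (k:ℝ) := Nat.cast_nonneg k
  rw [div_lt_one (by linarith)]
  linarith

lemma eps_tendsto : Tendsto eps atTop (𝓝 0) := by
  have h := tendsto_one_div_add_atTop_nhds_zero_nat (𝕜 := ℝ)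
  have h2 : Tendsto (fun k : ℕ => k + 1) atTop atTop := tendsto_add_atTop_nat 1
  have he : eps = (fun n : ℕ => 1 / ((n:ℝ) + 1)) ∘ (fun k : ℕ => k + 1) := by
    funext k
    show eps k = 1 / (((k+1 : ℕ):ℝ) + 1)
    rw [eps]; push_cast; ring
  rw [he]
  exact h.comp h2

noncomputable def dweight (i0 : ι) (s0 : S i0) (k : ℕ) (t : ∀ j, Dup S i0 j) : ℝ :=
  Sum.elim (fun a => if a = s0 then 1 - eps k else 1) (fun _ => eps k) (t i0)

noncomputable def liftSeq (i0 : ι) (s0 : S i0) (ρk : ℕ → (∀ i, S i) → ℝ) :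
    ℕ → (∀ j, Dup S i0 j) → ℝ :=
  fun k t => ρk k (projDup i0 s0 t) * dweight i0 s0 k t

lemma dweight_emb (k : ℕ) (s : ∀ j, S j) :
    dweight i0 s0 k (emb i0 s) = if s i0 = s0 then 1 - eps k else 1 := rfl

lemma dweight_hat (k : ℕ) (s : ∀ j, S j) :
    dweight i0 s0 k (hat i0 s) = eps k := by
  rw [dweight, hat_self]; rfl

lemma dweight_pos (k : ℕ) (t : ∀ j, Dup S i0 j) : 0 < dweight i0 s0 k t := by
  rw [dweight]
  cases t i0 with
  | inl a =>
    simp only [Sum.elim_inl]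
    split
    · linarith [eps_lt_one k]
    · norm_num
  | inr p => exact eps_pos k

lemma inl_dup_iff {i : ι} (x y : S i) :
    @Eq (Dup S i0 i) (Sum.inl x) (Sum.inl y) ↔ x = y := by
  constructor
  · intro h
    exact Sum.inl_injective h
  · intro h
    rw [h]

section Main

variable (u : ∀ _ : ι, (∀ j, S j) → ℝ) (ρ : (∀ i, S i) → ℝ) (ρk : ℕ → (∀ i, S i) → ℝ)

lemma dupLift_left (t : ∀ j, Dup S i0 j) (h : (t i0).isLeft) :
    dupLift i0 s0 ρ t = ρ (projDup i0 s0 t) := by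
  rw [dupLift]
  exact if_pos (fun j => by
    by_cases hj : j = i0
    · rw [hj]; exact h
    · exact isLeft_of_ne t hj)

lemma dupLift_not_left (t : ∀ j, Dup S i0 j) (h : ¬ (t i0).isLeft) :
    dupLift i0 s0 ρ t = 0 := by
  rw [dupLift]
  exact if_neg (fun hall => h (hall i0))

lemma dupLift_emb (s : ∀ j, S j) : dupLift i0 s0 ρ (emb i0 s) = ρ s := by
  rw [dupLift_left s0 ρ (emb i0 s) rfl, projDup_emb]

lemma dupLift_hat (s : ∀ j, S j) : dupLift i0 s0 ρ (hat i0 s) = 0 := by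
  refine dupLift_not_left s0 ρ (hat i0 s) ?_
  rw [hat_self]; simp

lemma dupPay_emb (i : ι) (s : ∀ j, S j) : dupPay i0 s0 u i (emb i0 s) = u i s := by
  show u i (projDup i0 s0 (emb i0 s)) = u i s
  rw [projDup_emb]

lemma dupPay_update_emb (i : ι) (s : ∀ j, S j) (si' : Dup S i0 i) :
    dupPay i0 s0 u i (Function.update (emb i0 s) i si') =
      u i (Function.update s i (prj i0 s0 si')) := by
  show u i (projDup i0 s0 _) = _
  rw [projDup_update, projDup_emb]

lemma dupPay_hat (i : ι) (s : ∀ j, S j) (hs : s i0 = s0) :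
    dupPay i0 s0 u i (hat i0 s) = u i s := by
  show u i (projDup i0 s0 (hat i0 s)) = u i s
  rw [projDup_hat s0 s hs]

lemma dupPay_update_hat (i : ι) (s : ∀ j, S j) (hs : s i0 = s0) (si' : Dup S i0 i) :
    dupPay i0 s0 u i (Function.update (hat i0 s) i si') =
      u i (Function.update s i (prj i0 s0 si')) := by
  show u i (projDup i0 s0 _) = _
  rw [projDup_update, projDup_hat s0 s hs]

lemma liftSeq_emb (k : ℕ) (s : ∀ j, S j) :
    liftSeq i0 s0 ρk k (emb i0 s) = ρk k s * (if s i0 = s0 then 1 - eps k else 1) := by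
  show ρk k (projDup i0 s0 (emb i0 s)) * dweight i0 s0 k (emb i0 s) = _
  rw [projDup_emb, dweight_emb]

lemma liftSeq_hat (k : ℕ) (s : ∀ j, S j) (hs : s i0 = s0) :
    liftSeq i0 s0 ρk k (hat i0 s) = ρk k s * eps k := by
  show ρk k (projDup i0 s0 (hat i0 s)) * dweight i0 s0 k (hat i0 s) = _
  rw [projDup_hat s0 s hs, dweight_hat]

lemma isDist_dupLift (hρ : IsDist ρ) : IsDist (dupLift i0 s0 ρ) := by
  constructor
  · intro t
    rw [dupLift]
    split
    · exact hρ.1 _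
    · exact le_refl 0
  · rw [sum_dup s0 (dupLift i0 s0 ρ)]
    simp only [dupLift_emb, dupLift_hat, ite_self, Finset.sum_const_zero, add_zero]
    exact hρ.2

lemma sum_liftSeq (k : ℕ) : ∑ t, liftSeq i0 s0 ρk k t = ∑ s, ρk k s := by
  rw [sum_dup s0, ← Finset.sum_add_distrib]
  apply Finset.sum_congr rfl
  intro s _
  by_cases hs : s i0 = s0
  · rw [if_pos hs, liftSeq_emb, liftSeq_hat s0 ρk k s hs, if_pos hs]
    ring
  · rw [if_neg hs, liftSeq_emb, if_neg hs, add_zero, mul_one]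

lemma tendsto_liftSeq (hlim : ∀ s, Tendsto (fun k => ρk k s) atTop (𝓝 (ρ s)))
    (t : ∀ j, Dup S i0 j) :
    Tendsto (fun k => liftSeq i0 s0 ρk k t) atTop (𝓝 (dupLift i0 s0 ρ t)) := by
  by_cases hL : (t i0).isLeft
  · rw [dupLift_left s0 ρ t hL]
    cases ht : t i0 with
    | inl a =>
      have hw : ∀ k, liftSeq i0 s0 ρk k t =
          ρk k (projDup i0 s0 t) * (if a = s0 then 1 - eps k else 1) := by
        intro k
        show ρk k (projDup i0 s0 t) * dweight i0 s0 k t = _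
        rw [dweight, ht, Sum.elim_inl]
      simp only [hw]
      by_cases ha : a = s0
      · simp only [if_pos ha]
        have := (hlim (projDup i0 s0 t)).mul
          ((tendsto_const_nhds (x := (1:ℝ))).sub eps_tendsto)
        simpa using this
      · simp only [if_neg ha, mul_one]
        exact hlim _
    | inr p => rw [ht] at hL; simp at hL
  · rw [dupLift_not_left s0 ρ t hL]
    cases ht : t i0 with
    | inl a => rw [ht] at hL; simp at hL
    | inr p =>
      have hw : ∀ k, liftSeq i0 s0 ρk k t = ρk k (projDup i0 s0 t) * eps k := by
        intro k
        show ρk k (projDup i0 s0 t) * dweight i0 s0 k t = _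
        rw [dweight, ht, Sum.elim_inr]
      simp only [hw]
      have := (hlim (projDup i0 s0 t)).mul eps_tendsto
      simpa using this

lemma marg_dupLift_inl (i : ι) (a : S i) :
    marg (dupLift i0 s0 ρ) i (Sum.inl a) = marg ρ i a := by
  unfold marg
  rw [sum_dup s0 (fun t : (∀ j, Dup S i0 j) => @ite ℝ (@Eq (Dup S i0 i) (t i) (Sum.inl a)) (instDecidableEqDup i0 i (t i) (Sum.inl a)) (dupLift i0 s0 ρ t) 0)]
  have h2 : (∑ s, if s i0 = s0 then
      (@ite ℝ (@Eq (Dup S i0 i) (hat i0 s i) (Sum.inl a)) (instDecidableEqDup i0 i (hat i0 s i) (Sum.inl a)) (dupLift i0 s0 ρ (hat i0 s)) 0) else 0) = 0 := by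
    apply Finset.sum_eq_zero
    intro s _
    rw [dupLift_hat]
    simp
  rw [h2, add_zero]
  apply Finset.sum_congr rfl
  intro s _
  rw [emb_apply, dupLift_emb]
  simp only [inl_dup_iff]

lemma marg_dupLift_inr (i : ι) (p : PLift (i = i0)) :
    marg (dupLift i0 s0 ρ) i (Sum.inr p) = 0 := by
  apply Finset.sum_eq_zero
  intro t _
  split_ifs with hti
  · refine dupLift_not_left s0 ρ t ?_
    have hp : i0 = i := p.down.symm
    subst hp
    rw [hti]; simp
  · rfl

lemma devGain_liftSeq_ne (k : ℕ) (i : ι) (hne : i ≠ i0) (a : S i) (si' : Dup S i0 i) :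
    devGain (dupPay i0 s0 u) (liftSeq i0 s0 ρk k) i (Sum.inl a) si' =
      devGain u (ρk k) i a (prj i0 s0 si') := by
  unfold devGain
  rw [sum_dup s0, ← Finset.sum_add_distrib]
  apply Finset.sum_congr rfl
  intro s _
  by_cases hs0 : s i0 = s0
  · rw [if_pos hs0, hat_ne s hne, emb_apply]
    simp only [inl_dup_iff]
    by_cases hsa : s i = a
    · rw [if_pos hsa, if_pos hsa, if_pos hsa,
        dupPay_emb, dupPay_update_emb, dupPay_hat s0 u i s hs0, dupPay_update_hat s0 u i s hs0,
        liftSeq_emb, liftSeq_hat s0 ρk k s hs0, if_pos hs0]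
      ring
    · rw [if_neg hsa, if_neg hsa, if_neg hsa, add_zero]
  · rw [if_neg hs0, add_zero, emb_apply]
    simp only [inl_dup_iff]
    by_cases hsa : s i = a
    · rw [if_pos hsa, if_pos hsa, dupPay_emb, dupPay_update_emb, liftSeq_emb, if_neg hs0,
        mul_one]
    · rw [if_neg hsa, if_neg hsa]

lemma devGain_liftSeq_i0 (k : ℕ) (a : S i0) (si' : Dup S i0 i0) :
    devGain (dupPay i0 s0 u) (liftSeq i0 s0 ρk k) i0 (Sum.inl a) si' =
      (if a = s0 then 1 - eps k else 1) * devGain u (ρk k) i0 a (prj i0 s0 si') := by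
  unfold devGain
  rw [sum_dup s0, Finset.mul_sum]
  have h2 : (∑ s, if s i0 = s0 then
      (@ite ℝ (@Eq (Dup S i0 i0) (hat i0 s i0) (Sum.inl a)) (instDecidableEqDup i0 i0 (hat i0 s i0) (Sum.inl a)) (liftSeq i0 s0 ρk k (hat i0 s) *
        (dupPay i0 s0 u i0 (hat i0 s) -
          dupPay i0 s0 u i0 (Function.update (hat i0 s) i0 si'))) 0) else 0) = 0 := by
    apply Finset.sum_eq_zero
    intro s _
    rw [hat_self]
    simp
  rw [h2, add_zero]
  apply Finset.sum_congr rfl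
  intro s _
  rw [emb_apply]
  simp only [inl_dup_iff]
  by_cases hsa : s i0 = a
  · rw [if_pos hsa, if_pos hsa, dupPay_emb, dupPay_update_emb, liftSeq_emb, hsa]
    ring
  · rw [if_neg hsa, if_neg hsa, mul_zero]

end Main

end DupAux


open DupAux in
/-- Duplication invariance (one direction): if `ρ` is a correlated perfect equilibrium of
`G`, then its lift to the game with a duplicated strategy is a correlated perfect
equilibrium of the duplicated game. -/
theorem cpe_dup_invariant {S : ι → Type*} [∀ i, Fintype (S i)] [∀ i, DecidableEq (S i)] (u : ∀ _ : ι, (∀ j, S j) → ℝ)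
    (i0 : ι) (s0 : S i0) (ρ : (∀ i, S i) → ℝ) (h : IsCPE u ρ) :
    IsCPE (dupPay i0 s0 u) (dupLift i0 s0 ρ) := by
  obtain ⟨hdist, ρk, hk, hlim, hbr⟩ := h
  refine ⟨isDist_dupLift s0 ρ hdist, liftSeq i0 s0 ρk, fun k => ⟨?_, ?_⟩, ?_, ?_⟩
  · constructor
    · intro t
      exact mul_nonneg ((hk k).1.1 _) (dweight_pos s0 k t).le
    · rw [sum_liftSeq s0 ρk k]
      exact (hk k).1.2
  · intro t
    exact mul_pos ((hk k).2 _) (dweight_pos s0 k t)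
  · exact tendsto_liftSeq s0 ρ ρk hlim
  · intro k i si hpos si'
    cases si with
    | inr p =>
      rw [marg_dupLift_inr s0 ρ i p] at hpos
      exact absurd hpos (lt_irrefl 0)
    | inl a =>
      rw [marg_dupLift_inl s0 ρ i a] at hpos
      by_cases hi : i = i0
      · subst hi
        rw [devGain_liftSeq_i0 s0 u ρk k a si']
        apply mul_nonneg
        · split
          · linarith [eps_lt_one k]
          · norm_num
        · exact hbr k i a hpos (prj i s0 si')
      · rw [devGain_liftSeq_ne s0 u ρk k i hi a si']
        exact hbr k i a hpos (prj i0 s0 si')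
end
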